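/- arXiv:2312.12584 — 7 statements merged into one kernel-verified Lean document; each statement's English description precedes it below -/
import Mathlib

section
/- Let G be a directed n-vertex graph, 0 < α < 1, 0 < φ < 1, and let X_1,...,X_k be a sequence of nonempty vertex subsets partitioning V(G) with max_i |X_i| = αn, such that for all 1 ≤ i < k, writing X'_i = X_{i+1} ∪ ... ∪ X_k, either |E(X_i, X'_i)| ≤ φ·|X_i| or |E(X'_i, X_i)| ≤ φ·|X_i|. Then there exists a cut (A,B) in G with |A|, |B| ≥ min{(1-α)n/2, n/4} and |E_G(A,B)| ≤ φ·(|X_1| + ... + |X_{k-1}|). -/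
open scoped Classical

open Finset Function

/-!
Call block `i` forward-sparse if few edges go from `X i` to the later blocks; by hypothesis every
other block but the last is backward-sparse. Walk along the blocks and stop at the first prefix in
which the forward-sparse blocks, or the backward-sparse blocks, have total size at least
`τ = min((1-α)n/2, n/4)`. As every block has at most `αn` vertices, that part has size in
`[τ, τ + αn)`, so it and its complement both have at least `τ` vertices; such a prefix exists
because the first `k - 1` blocks cover at least `(1-α)n ≥ 2τ` vertices. Take the forward-sparse
part as the source side `A`, or the backward-sparse part as the target side `B`. An edge from `A`
to `B` joining blocks `i` and `j` is a forward edge of `i` if `i < j` and a backward edge of `j`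
if `j < i`; either way that block lies in the prefix and is sparse in that direction, so
`|E(A, B)|` is at most `φ` times the size of the prefix.
-/

theorem exists_mem_Ico_of_step_le {α : Type*} [AddCommGroup α] [LinearOrder α]
    [IsOrderedAddMonoid α] {h : ℕ → α} {τ c : α} {T : ℕ} (h0 : h 0 < τ) (hT : τ ≤ h T)
    (hstep : ∀ t < T, h (t + 1) ≤ h t + c) : ∃ t ≤ T, h t ∈ Set.Ico τ (τ + c) := by
  have hex : ∃ t, τ ≤ h t := ⟨T, hT⟩
  obtain ⟨t, htT, ht, hmin⟩ : ∃ t ≤ T, τ ≤ h t ∧ ∀ s < t, h s < τ :=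
    ⟨Nat.find hex, Nat.find_min' hex hT, Nat.find_spec hex,
      fun s hs => not_le.1 (Nat.find_min hex hs)⟩
  cases t with
  | zero => exact absurd ht (not_le.2 h0)
  | succ s =>
    refine ⟨s + 1, htT, ht, ?_⟩
    calc h (s + 1) ≤ h s + c := hstep s htT
      _ < τ + c := add_lt_add_left (hmin s s.lt_succ_self) c

def cutEdges {V : Type*} [DecidableEq V] (E : Finset (V × V)) (A B : Finset V) :
    Finset (V × V) :=
  E.filter fun e => e.1 ∈ A ∧ e.2 ∈ B

section Blocks

variable {V ι : Type*} [DecidableEq V] [Fintype ι] [LinearOrder ι]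
  (E : Finset (V × V)) (X : ι → Finset V)

def laterBlocks (i : ι) : Finset V := (univ.filter fun j => i < j).biUnion X

def forwardEdges (i : ι) : Finset (V × V) := cutEdges E (X i) (laterBlocks X i)

def backwardEdges (i : ι) : Finset (V × V) := cutEdges E (laterBlocks X i) (X i)

def sparseSideEdges (D : Finset ι) (i : ι) : Finset (V × V) :=
  if i ∈ D then forwardEdges E X i else backwardEdges E X i

noncomputable def forwardSparseBlocks (φ : ℝ) : Finset ι :=
  univ.filter fun i => (#(forwardEdges E X i) : ℝ) ≤ φ * #(X i)

theorem card_sparseSideEdges_forwardSparseBlocks_le {φ : ℝ} {i : ι}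
    (h : (#(forwardEdges E X i) : ℝ) ≤ φ * #(X i) ∨
      (#(backwardEdges E X i) : ℝ) ≤ φ * #(X i)) :
    (#(sparseSideEdges E X (forwardSparseBlocks E X φ) i) : ℝ) ≤ φ * #(X i) := by
  by_cases hi : (#(forwardEdges E X i) : ℝ) ≤ φ * #(X i)
  · rwa [sparseSideEdges, if_pos (by simpa [forwardSparseBlocks] using hi)]
  · rw [sparseSideEdges, if_neg (by simpa [forwardSparseBlocks] using hi)]
    exact h.resolve_left hi

theorem cutEdges_biUnion_subset {S T P D : Finset ι} (hST : Disjoint S T)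
    (hfwd : ∀ i ∈ S, ∀ j ∈ T, i < j → i ∈ P ∧ i ∈ D)
    (hbwd : ∀ i ∈ S, ∀ j ∈ T, j < i → j ∈ P ∧ j ∉ D) :
    cutEdges E (S.biUnion X) (T.biUnion X) ⊆ P.biUnion (sparseSideEdges E X D) := by
  intro e he
  simp only [cutEdges, mem_filter, mem_biUnion] at he
  obtain ⟨heE, ⟨i, hiS, hi⟩, ⟨j, hjT, hj⟩⟩ := he
  rcases lt_trichotomy i j with hij | rfl | hji
  · obtain ⟨hiP, hiD⟩ := hfwd i hiS j hjT hij
    refine mem_biUnion.2 ⟨i, hiP, ?_⟩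
    simp only [sparseSideEdges, if_pos hiD, forwardEdges, cutEdges, laterBlocks, mem_filter,
      mem_biUnion, mem_univ, true_and]
    exact ⟨heE, hi, j, hij, hj⟩
  · exact absurd hjT (disjoint_left.1 hST hiS)
  · obtain ⟨hjP, hjD⟩ := hbwd i hiS j hjT hji
    refine mem_biUnion.2 ⟨j, hjP, ?_⟩
    simp only [sparseSideEdges, if_neg hjD, backwardEdges, cutEdges, laterBlocks, mem_filter,
      mem_biUnion, mem_univ, true_and]
    exact ⟨heE, ⟨i, hji, hi⟩, hj⟩

variable {E X}

theorem cutEdges_forward_prefix_subset {P : Finset ι} (hP : IsLowerSet (P : Set ι))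
    (D : Finset ι) :
    cutEdges E ((P.filter (· ∈ D)).biUnion X) ((P.filter (· ∈ D))ᶜ.biUnion X) ⊆
      P.biUnion (sparseSideEdges E X D) := by
  refine cutEdges_biUnion_subset E X disjoint_compl_right (fun i hi _ _ _ => mem_filter.1 hi)
    fun i hi j hj hji => ?_
  have hjP : j ∈ P := hP hji.le (mem_filter.1 hi).1
  exact ⟨hjP, fun hjD => mem_compl.1 hj (mem_filter.2 ⟨hjP, hjD⟩)⟩

theorem cutEdges_backward_prefix_subset {P : Finset ι} (hP : IsLowerSet (P : Set ι))
    (D : Finset ι) :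
    cutEdges E ((P.filter (· ∉ D))ᶜ.biUnion X) ((P.filter (· ∉ D)).biUnion X) ⊆
      P.biUnion (sparseSideEdges E X D) := by
  refine cutEdges_biUnion_subset E X disjoint_compl_left (fun i hi j hj hij => ?_)
    fun _ _ j hj _ => mem_filter.1 hj
  have hiP : i ∈ P := hP hij.le (mem_filter.1 hj).1
  exact ⟨hiP, not_not.1 fun hiD => mem_compl.1 hi (mem_filter.2 ⟨hiP, hiD⟩)⟩

end Blocks

section Partition

variable {V ι : Type*} [DecidableEq V] {X : ι → Finset V}

theorem disjoint_biUnion_of_disjoint (hX : Pairwise (Disjoint on X)) {S T : Finset ι}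
    (hST : Disjoint S T) : Disjoint (S.biUnion X) (T.biUnion X) := by
  rw [disjoint_biUnion_left]
  intro i hi
  rw [disjoint_biUnion_right]
  intro j hj
  exact hX fun hij => disjoint_left.1 hST hi (hij ▸ hj)

theorem card_biUnion_filter_add_card_biUnion_filter_not [DecidableEq ι]
    (hX : Pairwise (Disjoint on X)) (S : Finset ι) (p : ι → Prop) [DecidablePred p] :
    #((S.filter p).biUnion X) + #((S.filter (¬p ·)).biUnion X) = #(S.biUnion X) := by
  rw [← card_union_of_disjoint
    (disjoint_biUnion_of_disjoint hX (disjoint_filter_filter_not S S p)),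
    ← union_biUnion, filter_union_filter_not_eq]

variable [Fintype V] [Fintype ι] [DecidableEq ι]

theorem biUnion_union_biUnion_compl (hcover : univ.biUnion X = univ) (S : Finset ι) :
    S.biUnion X ∪ Sᶜ.biUnion X = univ := by
  rw [← union_biUnion, union_compl, hcover]

theorem card_biUnion_add_card_biUnion_compl (hX : Pairwise (Disjoint on X))
    (hcover : univ.biUnion X = univ) (S : Finset ι) :
    #(S.biUnion X) + #(Sᶜ.biUnion X) = Fintype.card V := by
  rw [← card_union_of_disjoint (disjoint_biUnion_of_disjoint hX disjoint_compl_right),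
    biUnion_union_biUnion_compl hcover, card_univ]

end Partition

section Prefix

variable {V : Type*} [DecidableEq V] {k : ℕ} {X : Fin k → Finset V}

def finPrefix (k t : ℕ) : Finset (Fin k) := univ.filter fun i => (i : ℕ) < t

theorem isLowerSet_finPrefix (k t : ℕ) : IsLowerSet (finPrefix k t : Set (Fin k)) :=
  fun i j hji hi => by
    simp only [finPrefix, coe_filter, mem_univ, true_and, Set.mem_ofPred_eq] at hi ⊢
    exact lt_of_le_of_lt hji hi

theorem finPrefix_mono {t s : ℕ} (h : t ≤ s) : finPrefix k t ⊆ finPrefix k s :=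
  fun i => by simp only [finPrefix, mem_filter, mem_univ, true_and]; omega

theorem card_biUnion_filter_finPrefix_succ_le (p : Fin k → Prop) [DecidablePred p] {t : ℕ}
    (ht : t < k) :
    #(((finPrefix k (t + 1)).filter p).biUnion X) ≤
      #(((finPrefix k t).filter p).biUnion X) + #(X ⟨t, ht⟩) := by
  have hsub : (finPrefix k (t + 1)).filter p ⊆ insert ⟨t, ht⟩ ((finPrefix k t).filter p) := by
    intro i hi
    simp only [finPrefix, mem_filter, mem_univ, true_and] at hi
    rcases Nat.lt_succ_iff_lt_or_eq.1 hi.1 with hlt | heq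
    · exact mem_insert_of_mem (by simp [finPrefix, hlt, hi.2])
    · exact mem_insert.2 (Or.inl (Fin.ext heq))
  calc _ ≤ #((insert ⟨t, ht⟩ ((finPrefix k t).filter p)).biUnion X) :=
        card_le_card (biUnion_subset_biUnion_of_subset_left X hsub)
    _ ≤ _ := by rw [biUnion_insert, add_comm]; exact card_union_le _ _

variable [Fintype V]

theorem exists_finPrefix_mem_Ico (hX : Pairwise (Disjoint on X))
    (hcover : univ.biUnion X = univ) (D : Finset (Fin k)) {τ c : ℝ} (hk : 0 < k) (hτ : 0 < τ)
    (hc : ∀ i, (#(X i) : ℝ) ≤ c) (hn : 2 * τ + c ≤ Fintype.card V) :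
    ∃ t ≤ k - 1,
      (#(((finPrefix k t).filter (· ∈ D)).biUnion X) : ℝ) ∈ Set.Ico τ (τ + c) ∨
      (#(((finPrefix k t).filter (· ∉ D)).biUnion X) : ℝ) ∈ Set.Ico τ (τ + c) := by
  set f : ℕ → ℝ := fun t => #(((finPrefix k t).filter (· ∈ D)).biUnion X)
  set g : ℕ → ℝ := fun t => #(((finPrefix k t).filter (· ∉ D)).biUnion X)
  have hlast : (finPrefix k (k - 1))ᶜ = {⟨k - 1, by omega⟩} := by
    ext i
    simp only [finPrefix, mem_compl, mem_filter, mem_univ, true_and, mem_singleton, Fin.ext_iff]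
    omega
  have htotal : f (k - 1) + g (k - 1) + #(X ⟨k - 1, by omega⟩) = Fintype.card V := by
    have := card_biUnion_filter_add_card_biUnion_filter_not hX (finPrefix k (k - 1)) (· ∈ D)
    have := card_biUnion_add_card_biUnion_compl hX hcover (finPrefix k (k - 1))
    rw [hlast, singleton_biUnion] at this
    simp only [f, g]
    exact_mod_cast (by omega : _)
  have h0 : max (f 0) (g 0) < τ := by simpa [f, g, finPrefix] using hτ
  have hT : τ ≤ max (f (k - 1)) (g (k - 1)) := by
    by_contra! h
    linarith [max_lt_iff.1 h, hc ⟨k - 1, by omega⟩]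
  have hstep : ∀ t < k - 1, max (f (t + 1)) (g (t + 1)) ≤ max (f t) (g t) + c := by
    intro t ht
    have hXt := hc ⟨t, by omega⟩
    have hf : f (t + 1) ≤ f t + #(X ⟨t, by omega⟩) := by
      simp only [f]
      exact_mod_cast card_biUnion_filter_finPrefix_succ_le (X := X) (· ∈ D) (by omega)
    have hg : g (t + 1) ≤ g t + #(X ⟨t, by omega⟩) := by
      simp only [g]
      exact_mod_cast card_biUnion_filter_finPrefix_succ_le (X := X) (· ∉ D) (by omega)
    exact max_le (by linarith [le_max_left (f t) (g t)]) (by linarith [le_max_right (f t) (g t)])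
  obtain ⟨t, ht, hlo, hhi⟩ :=
    exists_mem_Ico_of_step_le (h := fun t => max (f t) (g t)) h0 hT hstep
  refine ⟨t, ht, (le_max_iff.1 hlo).imp (fun h => ⟨h, ?_⟩) (fun h => ⟨h, ?_⟩)⟩
  · exact (le_max_left _ _).trans_lt hhi
  · exact (le_max_right _ _).trans_lt hhi

end Prefix

theorem exists_finPrefix_cut {V : Type*} [DecidableEq V] [Fintype V] {k : ℕ}
    (E : Finset (V × V)) {X : Fin k → Finset V} (hX : Pairwise (Disjoint on X))
    (hcover : univ.biUnion X = univ) (D : Finset (Fin k)) {τ c : ℝ} (hk : 0 < k) (hτ : 0 < τ)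
    (hc : ∀ i, (#(X i) : ℝ) ≤ c) (hn : 2 * τ + c ≤ Fintype.card V) :
    ∃ t ≤ k - 1, ∃ S : Finset (Fin k), τ ≤ #(S.biUnion X) ∧ τ ≤ #(Sᶜ.biUnion X) ∧
      cutEdges E (S.biUnion X) (Sᶜ.biUnion X) ⊆
        (finPrefix k t).biUnion (sparseSideEdges E X D) := by
  obtain ⟨t, ht, ⟨hlo, hhi⟩ | ⟨hlo, hhi⟩⟩ :=
    exists_finPrefix_mem_Ico hX hcover D hk hτ hc hn
  · set S := (finPrefix k t).filter (· ∈ D)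
    have hsum : (#(S.biUnion X) : ℝ) + #(Sᶜ.biUnion X) = Fintype.card V := by
      exact_mod_cast card_biUnion_add_card_biUnion_compl hX hcover S
    exact ⟨t, ht, S, hlo, by linarith,
      cutEdges_forward_prefix_subset (isLowerSet_finPrefix k t) D⟩
  · set T := (finPrefix k t).filter (· ∉ D)
    have hsum : (#(T.biUnion X) : ℝ) + #(Tᶜ.biUnion X) = Fintype.card V := by
      exact_mod_cast card_biUnion_add_card_biUnion_compl hX hcover T
    refine ⟨t, ht, Tᶜ, by linarith, ?_⟩
    rw [compl_compl]
    exact ⟨hlo, cutEdges_backward_prefix_subset (isLowerSet_finPrefix k t) D⟩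

theorem stmt3_general {V : Type*} [Fintype V] [DecidableEq V] (E : Finset (V × V))
    (α φ : ℝ) (k : ℕ) (X : Fin k → Finset V)
    (hα1 : α < 1) (hφ0 : 0 < φ)
    (hne : ∀ i, (X i).Nonempty)
    (hdisj : ∀ i j, i ≠ j → Disjoint (X i) (X j))
    (hcover : Finset.univ.biUnion X = Finset.univ)
    (hmaxle : ∀ i, ((X i).card : ℝ) ≤ α * (Fintype.card V : ℝ))
    (hmaxeq : ∃ i, ((X i).card : ℝ) = α * (Fintype.card V : ℝ))
    (hsparse : ∀ i : Fin k, (i : ℕ) < k - 1 →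
      ((E.filter (fun e => e.1 ∈ X i ∧
          e.2 ∈ (Finset.univ.filter (fun j : Fin k => i < j)).biUnion X)).card : ℝ) ≤
        φ * ((X i).card : ℝ) ∨
      ((E.filter (fun e =>
          e.1 ∈ (Finset.univ.filter (fun j : Fin k => i < j)).biUnion X ∧
          e.2 ∈ X i)).card : ℝ) ≤ φ * ((X i).card : ℝ)) :
    ∃ A B : Finset V, A.Nonempty ∧ B.Nonempty ∧ Disjoint A B ∧ A ∪ B = Finset.univ ∧
      min ((1 - α) * (Fintype.card V : ℝ) / 2) ((Fintype.card V : ℝ) / 4)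
        ≤ (A.card : ℝ) ∧
      min ((1 - α) * (Fintype.card V : ℝ) / 2) ((Fintype.card V : ℝ) / 4)
        ≤ (B.card : ℝ) ∧
      ((E.filter (fun e => e.1 ∈ A ∧ e.2 ∈ B)).card : ℝ) ≤
        φ * ∑ i ∈ Finset.univ.filter (fun i : Fin k => (i : ℕ) < k - 1),
          ((X i).card : ℝ) := by
  obtain ⟨i₀, -⟩ := hmaxeq
  have hn : (0 : ℝ) < Fintype.card V :=
    Nat.cast_pos.2 (Fintype.card_pos_iff.2 ((hne i₀).elim fun v _ => ⟨v⟩))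
  set τ := min ((1 - α) * (Fintype.card V : ℝ) / 2) ((Fintype.card V : ℝ) / 4)
  have hτ : 0 < τ := lt_min (by have := sub_pos.2 hα1; positivity) (by positivity)
  have hτle : τ ≤ (1 - α) * Fintype.card V / 2 := min_le_left _ _
  have hX : Pairwise (Disjoint on X) := fun i j => hdisj i j
  obtain ⟨t, ht, S, hS, hSc, hcut⟩ := exists_finPrefix_cut E hX hcover
    (forwardSparseBlocks E X φ) i₀.pos hτ hmaxle (by linarith)
  have hbound : (#(cutEdges E (S.biUnion X) (Sᶜ.biUnion X)) : ℝ) ≤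
      φ * ∑ i ∈ finPrefix k (k - 1), (#(X i) : ℝ) :=
    calc _ ≤ ∑ i ∈ finPrefix k t,
          (#(sparseSideEdges E X (forwardSparseBlocks E X φ) i) : ℝ) := by
          exact_mod_cast (card_le_card hcut).trans card_biUnion_le
      _ ≤ ∑ i ∈ finPrefix k t, φ * #(X i) := sum_le_sum fun i hi =>
          card_sparseSideEdges_forwardSparseBlocks_le E X
            (hsparse i (by simp [finPrefix] at hi; omega))
      _ = φ * ∑ i ∈ finPrefix k t, (#(X i) : ℝ) := (mul_sum ..).symm
      _ ≤ _ := mul_le_mul_of_nonneg_left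
          (sum_le_sum_of_subset_of_nonneg (finPrefix_mono ht) fun _ _ _ => by positivity) hφ0.le
  exact ⟨S.biUnion X, Sᶜ.biUnion X, card_pos.1 (by exact_mod_cast hτ.trans_le hS),
    card_pos.1 (by exact_mod_cast hτ.trans_le hSc),
    disjoint_biUnion_of_disjoint hX disjoint_compl_right, biUnion_union_biUnion_compl hcover S,
    hS, hSc, hbound⟩

/-- Let `G` be a directed `n`-vertex graph, `0 < α < 1`, `0 < φ < 1`, and let
`X_1,...,X_k` be a sequence of nonempty vertex subsets partitioning `V(G)` with
`max_i |X_i| = αn`, such that for all `1 ≤ i < k`, writing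
`X'_i = X_{i+1} ∪ ... ∪ X_k`, either `|E(X_i, X'_i)| ≤ φ·|X_i|` or
`|E(X'_i, X_i)| ≤ φ·|X_i|`. Then there exists a cut `(A,B)` in `G` with
`|A|, |B| ≥ min{(1-α)n/2, n/4}` and `|E_G(A,B)| ≤ φ·(|X_1| + ... + |X_{k-1}|)`. -/
theorem stmt3 {V : Type*} [Fintype V] [DecidableEq V] (E : Finset (V × V))
    (α φ : ℝ) (k : ℕ) (X : Fin k → Finset V)
    (hα0 : 0 < α) (hα1 : α < 1) (hφ0 : 0 < φ) (hφ1 : φ < 1)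
    (hne : ∀ i, (X i).Nonempty)
    (hdisj : ∀ i j, i ≠ j → Disjoint (X i) (X j))
    (hcover : Finset.univ.biUnion X = Finset.univ)
    (hmaxle : ∀ i, ((X i).card : ℝ) ≤ α * (Fintype.card V : ℝ))
    (hmaxeq : ∃ i, ((X i).card : ℝ) = α * (Fintype.card V : ℝ))
    (hsparse : ∀ i : Fin k, (i : ℕ) < k - 1 →
      ((E.filter (fun e => e.1 ∈ X i ∧
          e.2 ∈ (Finset.univ.filter (fun j : Fin k => i < j)).biUnion X)).card : ℝ) ≤
        φ * ((X i).card : ℝ) ∨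
      ((E.filter (fun e =>
          e.1 ∈ (Finset.univ.filter (fun j : Fin k => i < j)).biUnion X ∧
          e.2 ∈ X i)).card : ℝ) ≤ φ * ((X i).card : ℝ)) :
    ∃ A B : Finset V, A.Nonempty ∧ B.Nonempty ∧ Disjoint A B ∧ A ∪ B = Finset.univ ∧
      min ((1 - α) * (Fintype.card V : ℝ) / 2) ((Fintype.card V : ℝ) / 4)
        ≤ (A.card : ℝ) ∧
      min ((1 - α) * (Fintype.card V : ℝ) / 2) ((Fintype.card V : ℝ) / 4)
        ≤ (B.card : ℝ) ∧
      ((E.filter (fun e => e.1 ∈ A ∧ e.2 ∈ B)).card : ℝ) ≤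
        φ * ∑ i ∈ Finset.univ.filter (fun i : Fin k => (i : ℕ) < k - 1),
          ((X i).card : ℝ) :=
  stmt3_general E α φ k X hα1 hφ0 hne hdisj hcover hmaxle hmaxeq hsparse
end

section
/- Let H = (L, R, E) be a simple directed bipartite graph with no isolated vertices, such that every vertex in R has out-degree at most 1 and every vertex in L has in-degree at most 1. Given a cut (A,B) in H of sparsity at most φ ≤ 1/4, there exists a well-structured cut (A',B') in H of sparsity at most 2φ, with A' ⊆ A and |A'| ≥ (1-φ)|A|. -/
open scoped Classical

/-!
Move to `B` every vertex `x ∈ A ∩ L` that is the tail of a regular edge crossing the cut. Each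
such `x` lies in `L`, so it has in-degree at most one, and the edges of the new cut are the old
special crossing edges together with at most one edge into each moved vertex; the moved vertices
are at most as many as the regular crossing edges, so no crossing edges are gained. Afterwards no
regular edge crosses, at most `φ |A|` vertices have left `A`, and as `φ ≤ 1/4` the smaller side
shrinks by at most a factor of two, which doubles the sparsity bound.
-/

open Finset

section MovingRegularTails

variable {V : Type*} [DecidableEq V] (E : Finset (V × V))

def edgesBetween (A B : Finset V) : Finset (V × V) :=
  E.filter fun e => e.1 ∈ A ∧ e.2 ∈ B

def regularTails (L A B : Finset V) : Finset V :=
  ((edgesBetween E A B).filter fun e => e.1 ∈ L).image Prod.fst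

variable {E} {L R A B : Finset V}

lemma card_filter_snd_mem_le {S : Finset V}
    (hin : ∀ v ∈ S, #(E.filter fun e => e.2 = v) ≤ 1) :
    #(E.filter fun e => e.2 ∈ S) ≤ #S := by
  refine card_le_card_of_injOn Prod.snd (fun e he => (mem_filter.mp he).2) ?_
  intro e he e' he' hsnd
  rw [mem_coe, mem_filter] at he he'
  exact card_le_one.mp (hin e.2 he.2) e (mem_filter.mpr ⟨he.1, rfl⟩) e'
    (mem_filter.mpr ⟨he'.1, hsnd.symm⟩)

lemma regularTails_subset_left : regularTails E L A B ⊆ A := by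
  intro v hv
  obtain ⟨e, he, rfl⟩ := mem_image.mp hv
  exact (mem_filter.mp (mem_filter.mp he).1).2.1

lemma regularTails_subset : regularTails E L A B ⊆ L := by
  intro v hv
  obtain ⟨e, he, rfl⟩ := mem_image.mp hv
  exact (mem_filter.mp he).2

lemma card_regularTails_le : #(regularTails E L A B) ≤ #(edgesBetween E A B) :=
  card_image_le.trans (card_filter_le _ _)

lemma fst_notMem_of_mem_edgesBetween_sdiff_regularTails {e : V × V}
    (he : e ∈ edgesBetween E (A \ regularTails E L A B) B) : e.1 ∉ L := by
  obtain ⟨heE, hA, hB⟩ := mem_filter.mp he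
  intro hL
  have hcross : e ∈ edgesBetween E A B := mem_filter.mpr ⟨heE, (mem_sdiff.mp hA).1, hB⟩
  exact (mem_sdiff.mp hA).2 (mem_image_of_mem Prod.fst (mem_filter.mpr ⟨hcross, hL⟩))

lemma edgesBetween_sdiff_union_regularTails_subset :
    edgesBetween E (A \ regularTails E L A B) (B ∪ regularTails E L A B) ⊆
      (edgesBetween E A B).filter (fun e => e.1 ∉ L) ∪
        E.filter (fun e => e.2 ∈ regularTails E L A B) := by
  intro e he
  obtain ⟨heE, hA, hB⟩ := mem_filter.mp he
  rcases mem_union.mp hB with hB | hX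
  · have hcross : e ∈ edgesBetween E (A \ regularTails E L A B) B :=
      mem_filter.mpr ⟨heE, hA, hB⟩
    exact mem_union_left _ <| mem_filter.mpr
      ⟨mem_filter.mpr ⟨heE, (mem_sdiff.mp hA).1, hB⟩,
        fst_notMem_of_mem_edgesBetween_sdiff_regularTails hcross⟩
  · exact mem_union_right _ (mem_filter.mpr ⟨heE, hX⟩)

lemma card_edgesBetween_sdiff_union_regularTails_le
    (hinL : ∀ v ∈ L, #(E.filter fun e => e.2 = v) ≤ 1) :
    #(edgesBetween E (A \ regularTails E L A B) (B ∪ regularTails E L A B)) ≤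
      #(edgesBetween E A B) := by
  calc _ ≤ #((edgesBetween E A B).filter (fun e => e.1 ∉ L)) +
          #(E.filter (fun e => e.2 ∈ regularTails E L A B)) :=
        (card_le_card edgesBetween_sdiff_union_regularTails_subset).trans (card_union_le _ _)
    _ ≤ #((edgesBetween E A B).filter (fun e => e.1 ∉ L)) +
          #((edgesBetween E A B).filter (fun e => e.1 ∈ L)) :=
        Nat.add_le_add_left ((card_filter_snd_mem_le fun v hv =>
          hinL v (regularTails_subset hv)).trans card_image_le) _
    _ = #(edgesBetween E A B) := by rw [add_comm, card_filter_add_card_filter_not]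

lemma special_of_crosses_sdiff_union_regularTails
    (hLR : Disjoint L R)
    (hbip : ∀ e ∈ E, (e.1 ∈ L ∧ e.2 ∈ R) ∨ (e.1 ∈ R ∧ e.2 ∈ L))
    {e : V × V} (heE : e ∈ E) (hA : e.1 ∈ A \ regularTails E L A B)
    (hB : e.2 ∈ B ∪ regularTails E L A B) : e.1 ∈ R ∧ e.2 ∈ L := by
  refine (hbip e heE).resolve_left fun ⟨hL, hR⟩ => ?_
  have hB : e.2 ∈ B := (mem_union.mp hB).resolve_right fun hX =>
    disjoint_left.mp hLR (regularTails_subset hX) hR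
  exact fst_notMem_of_mem_edgesBetween_sdiff_regularTails (mem_filter.mpr ⟨heE, hA, hB⟩) hL

end MovingRegularTails

lemma min_le_two_mul_min {a b a' b' φ : ℝ} (hφ : φ ≤ 1 / 2) (ha : 0 ≤ a) (hb : 0 ≤ b)
    (ha' : (1 - φ) * a ≤ a') (hb' : b ≤ b') : min a b ≤ 2 * min a' b' := by
  rw [mul_min_of_nonneg _ _ zero_le_two]
  exact le_min (by nlinarith [min_le_left a b]) (by linarith [min_le_right a b])

theorem stmt4_general {V : Type*} [Fintype V] [DecidableEq V] (L R : Finset V)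
    (E : Finset (V × V)) (φ : ℝ) (A B : Finset V)
    (hLR : Disjoint L R)
    (hbip : ∀ e ∈ E, (e.1 ∈ L ∧ e.2 ∈ R) ∨ (e.1 ∈ R ∧ e.2 ∈ L))
    (hinL : ∀ v ∈ L, (E.filter (fun e => e.2 = v)).card ≤ 1)
    (hφ : φ ≤ 1 / 4)
    (hA : A.Nonempty) (hB : B.Nonempty) (hABdisj : Disjoint A B)
    (hABcover : A ∪ B = Finset.univ)
    (hsparsity : ((E.filter (fun e => e.1 ∈ A ∧ e.2 ∈ B)).card : ℝ) ≤
      φ * min (A.card : ℝ) (B.card : ℝ)) :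
    ∃ A' B' : Finset V, A'.Nonempty ∧ B'.Nonempty ∧ Disjoint A' B' ∧
      A' ∪ B' = Finset.univ ∧ A' ⊆ A ∧
      (1 - φ) * (A.card : ℝ) ≤ (A'.card : ℝ) ∧
      (∀ e ∈ E, e.1 ∈ A' → e.2 ∈ B' → e.1 ∈ R ∧ e.2 ∈ L) ∧
      ((E.filter (fun e => e.1 ∈ A' ∧ e.2 ∈ B')).card : ℝ) ≤
        2 * φ * min (A'.card : ℝ) (B'.card : ℝ) := by
  set X := regularTails E L A B
  have hA0 : (0 : ℝ) < #A := by exact_mod_cast hA.card_pos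
  have hφ0 : 0 ≤ φ := nonneg_of_mul_nonneg_left ((Nat.cast_nonneg _).trans hsparsity)
    (lt_min hA0 (by exact_mod_cast hB.card_pos))
  have hX : (#X : ℝ) ≤ φ * #A :=
    calc (#X : ℝ) ≤ #(edgesBetween E A B) := by exact_mod_cast card_regularTails_le
      _ ≤ φ * min (#A : ℝ) #B := hsparsity
      _ ≤ φ * #A := mul_le_mul_of_nonneg_left (min_le_left _ _) hφ0
  have hA' : (1 - φ) * #A ≤ (#(A \ X) : ℝ) := by
    rw [card_sdiff_of_subset regularTails_subset_left,
      Nat.cast_sub (card_le_card regularTails_subset_left)]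
    linarith
  refine ⟨A \ X, B ∪ X, ?_, hB.mono subset_union_left, ?_, ?_, sdiff_subset, hA',
    fun e he => special_of_crosses_sdiff_union_regularTails hLR hbip he, ?_⟩
  · exact card_pos.mp (by exact_mod_cast (mul_pos (by linarith) hA0).trans_le hA')
  · exact disjoint_union_right.mpr ⟨hABdisj.mono_left sdiff_subset, sdiff_disjoint⟩
  · rw [← union_assoc, union_right_comm, sdiff_union_self_eq_union, union_right_comm, hABcover]
    exact top_sup_eq _
  · calc (#(edgesBetween E (A \ X) (B ∪ X)) : ℝ) ≤ #(edgesBetween E A B) := by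
          exact_mod_cast card_edgesBetween_sdiff_union_regularTails_le hinL
      _ ≤ φ * min (#A : ℝ) #B := hsparsity
      _ ≤ φ * (2 * min (#(A \ X) : ℝ) #(B ∪ X)) := by
          refine mul_le_mul_of_nonneg_left (min_le_two_mul_min (by linarith) (by positivity)
            (by positivity) hA' ?_) hφ0
          exact_mod_cast card_le_card subset_union_left
      _ = 2 * φ * min (#(A \ X) : ℝ) #(B ∪ X) := by ring

/-- Let `H = (L, R, E)` be a simple directed bipartite graph with no isolated vertices,
such that every vertex in `R` has out-degree at most 1 and every vertex in `L` has
in-degree at most 1 (edges from `R` to `L` are special, edges from `L` to `R` regular).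
Given a cut `(A,B)` in `H` of sparsity at most `φ ≤ 1/4`, there exists a
well-structured cut `(A',B')` in `H` (all edges of `E_H(A',B')` are special) of
sparsity at most `2φ`, with `A' ⊆ A` and `|A'| ≥ (1-φ)|A|`. -/
theorem stmt4 {V : Type*} [Fintype V] [DecidableEq V] (L R : Finset V)
    (E : Finset (V × V)) (φ : ℝ) (A B : Finset V)
    (hLR : Disjoint L R) (hLRcover : L ∪ R = Finset.univ)
    (hbip : ∀ e ∈ E, (e.1 ∈ L ∧ e.2 ∈ R) ∨ (e.1 ∈ R ∧ e.2 ∈ L))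
    (hnoiso : ∀ v : V, ∃ e ∈ E, e.1 = v ∨ e.2 = v)
    (houtR : ∀ v ∈ R, (E.filter (fun e => e.1 = v)).card ≤ 1)
    (hinL : ∀ v ∈ L, (E.filter (fun e => e.2 = v)).card ≤ 1)
    (hφ : φ ≤ 1 / 4)
    (hA : A.Nonempty) (hB : B.Nonempty) (hABdisj : Disjoint A B)
    (hABcover : A ∪ B = Finset.univ)
    (hsparsity : ((E.filter (fun e => e.1 ∈ A ∧ e.2 ∈ B)).card : ℝ) ≤
      φ * min (A.card : ℝ) (B.card : ℝ)) :
    ∃ A' B' : Finset V, A'.Nonempty ∧ B'.Nonempty ∧ Disjoint A' B' ∧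
      A' ∪ B' = Finset.univ ∧ A' ⊆ A ∧
      (1 - φ) * (A.card : ℝ) ≤ (A'.card : ℝ) ∧
      (∀ e ∈ E, e.1 ∈ A' → e.2 ∈ B' → e.1 ∈ R ∧ e.2 ∈ L) ∧
      ((E.filter (fun e => e.1 ∈ A' ∧ e.2 ∈ B')).card : ℝ) ≤
        2 * φ * min (A'.card : ℝ) (B'.card : ℝ) :=
  stmt4_general L R E φ A B hLR hbip hinL hφ hA hB hABdisj hABcover hsparsity
end

section
/- Let H be a directed graph with s, t, and a collection P' of k simple s-t paths, each of total length at most 1/(32 log m), such that the paths in P' cause edge-congestion at most log m. Then the subgraph H* consisting of the union of the edges of paths in P' contains a collection of at least k/(2 log m) edge-disjoint s-t paths, each of total length at most 1/8, where edge lengths in H* equal those in H. -/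
open scoped Classical

/-- The list of (directed) edges traversed by a walk given by its list of vertices. -/
def pathEdges {V : Type*} (p : List V) : List (V × V) := p.zip p.tail

/-- `p` is a simple directed path from `s` to `t` in the graph with edge set `E`. -/
def IsPath {V : Type*} (E : Finset (V × V)) (s t : V) (p : List V) : Prop :=
  p.Chain' (fun a b => (a, b) ∈ E) ∧ p.head? = some s ∧ p.getLast? = some t ∧ p.Nodup

/-!
Write `η = log m`. Every `s`-`t` cut of `H*` meets each of the `k` paths, and each of its edges
lies on at most `η` of them, so every cut has at least `k / η` edges. By Menger's theorem
(proved by augmenting unit flows along residual paths and decomposing the resulting integral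
flow into paths) `H*` contains `⌈k / η⌉` edge-disjoint `s`-`t` paths. Their total length is at
most the total length of `H*`, at most `k / (32 η)`, so at most `k / (4 η)` of them are longer
than `1/8`, and the remaining ones are at least `k / (2 η)` in number.
-/

open Finset Function

lemma Finset.sum_biUnion_le_sum_sum {ι α M : Type*} [DecidableEq α] [AddCommMonoid M]
    [PartialOrder M] [IsOrderedAddMonoid M] {f : α → M} (hf : ∀ a, 0 ≤ f a) (s : Finset ι)
    (t : ι → Finset α) : ∑ a ∈ s.biUnion t, f a ≤ ∑ i ∈ s, ∑ a ∈ t i, f a := by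
  induction s using Finset.induction_on with
  | empty => simp
  | insert i s hi ih =>
    rw [biUnion_insert, sum_insert hi]
    calc ∑ a ∈ t i ∪ s.biUnion t, f a
        ≤ ∑ a ∈ t i ∪ s.biUnion t, f a + ∑ a ∈ t i ∩ s.biUnion t, f a :=
          le_add_of_nonneg_right (sum_nonneg fun a _ => hf a)
      _ = ∑ a ∈ t i, f a + ∑ a ∈ s.biUnion t, f a := sum_union_inter
      _ ≤ _ := add_le_add_right ih _

lemma List.length_sub_sum_div_le_length_filter {α : Type*} {f : α → ℝ} {c : ℝ}
    (hc : 0 < c) :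
    ∀ L : List α, (∀ a ∈ L, 0 ≤ f a) →
      (L.length : ℝ) - (L.map f).sum / c ≤ (L.filter fun a => f a ≤ c).length
  | [], _ => by simp
  | a :: L, hf => by
    have ih := length_sub_sum_div_le_length_filter hc L fun b hb => hf b (mem_cons_of_mem _ hb)
    have ha : 0 ≤ f a / c := div_nonneg (hf a mem_cons_self) hc.le
    by_cases h : f a ≤ c
    · rw [filter_cons_of_pos (by simpa using h)]
      simp only [length_cons, map_cons, sum_cons, add_div]
      push_cast
      linarith
    · have : 1 ≤ f a / c := (one_le_div hc).2 (le_of_not_ge h)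
      rw [filter_cons_of_neg (by simpa using h)]
      simp only [length_cons, map_cons, sum_cons, add_div]
      push_cast
      linarith

lemma List.Pairwise.rel_get_of_ne {α : Type*} {R : α → α → Prop} {L : List α}
    (h : L.Pairwise R) (hR : ∀ a b, R a b → R b a) {i j : Fin L.length} (hij : i ≠ j) :
    R (L.get i) (L.get j) := by
  rcases lt_or_gt_of_ne hij with hlt | hgt
  · exact h.rel_get_of_lt hlt
  · exact hR _ _ (h.rel_get_of_lt hgt)

section Paths

variable {V : Type*}

lemma pathEdges_cons_cons (a b : V) (l : List V) :
    pathEdges (a :: b :: l) = (a, b) :: pathEdges (b :: l) := rfl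

lemma isChain_iff_forall_mem_pathEdges {r : V → V → Prop} :
    ∀ {p : List V}, p.IsChain r ↔ ∀ e ∈ pathEdges p, r e.1 e.2
  | [] | [_] => by simp [pathEdges]
  | a :: b :: l => by
      rw [List.isChain_cons_cons, pathEdges_cons_cons, isChain_iff_forall_mem_pathEdges]
      simp

lemma List.Nodup.pathEdges : ∀ {p : List V}, p.Nodup → (_root_.pathEdges p).Nodup
  | [], _ | [_], _ => by simp [_root_.pathEdges]
  | a :: b :: l, h => by
      rw [pathEdges_cons_cons]
      exact List.nodup_cons.2
        ⟨fun he => (List.nodup_cons.1 h).1 (List.of_mem_zip he).1, h.of_cons.pathEdges⟩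

lemma IsPath.mem_of_mem_pathEdges {E : Finset (V × V)} {s t : V} {p : List V}
    (hp : IsPath E s t p) {e : V × V} (he : e ∈ pathEdges p) : e ∈ E :=
  isChain_iff_forall_mem_pathEdges.1 hp.1 e he

lemma IsPath.mono {E F : Finset (V × V)} {s t : V} {p : List V} (hp : IsPath E s t p)
    (hEF : E ⊆ F) : IsPath F s t p :=
  ⟨List.IsChain.imp (fun _ _ h => hEF h) hp.1, hp.2⟩

lemma exists_isPath_of_reflTransGen {E : Finset (V × V)} {s t : V}
    (h : Relation.ReflTransGen (fun a b => (a, b) ∈ E) s t) : ∃ p, IsPath E s t p := by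
  induction h using Relation.ReflTransGen.head_induction_on with
  | refl => exact ⟨[t], List.isChain_singleton _, rfl, rfl, List.nodup_singleton _⟩
  | @head a b hab _ ih =>
    obtain ⟨q, hchain, hhead, hlast, hnodup⟩ := ih
    by_cases haq : a ∈ q
    · -- shortcut the loop: keep only the part of `q` after its visit to `a`
      obtain ⟨q₁, q₂, rfl⟩ := List.append_of_mem haq
      have hsuff : (a :: q₂) <:+ q₁ ++ a :: q₂ := List.suffix_append _ _
      refine ⟨a :: q₂, List.IsChain.infix hchain hsuff.isInfix, rfl, ?_,
        hnodup.sublist hsuff.sublist⟩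
      rwa [List.getLast?_append_of_ne_nil _ (List.cons_ne_nil _ _)] at hlast
    · obtain ⟨q', rfl⟩ : ∃ q', q = b :: q' := by
        cases q with
        | nil => simp at hhead
        | cons c q' => exact ⟨q', by simpa using hhead⟩
      exact ⟨a :: b :: q', List.isChain_cons_cons.2 ⟨hab, hchain⟩, rfl,
        by rwa [List.getLast?_cons_cons], List.nodup_cons.2 ⟨haq, hnodup⟩⟩

lemma exists_mem_pathEdges_mem_not_mem (R : Set V) :
    ∀ {p : List V} {a b : V}, p.head? = some a → p.getLast? = some b → a ∈ R → b ∉ R →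
      ∃ e ∈ pathEdges p, e.1 ∈ R ∧ e.2 ∉ R
  | [], _, _, h, _, _, _ => by simp at h
  | [_], _, _, ha, hb, haR, hbR => by
      simp only [List.head?_cons, List.getLast?_singleton, Option.some.injEq] at ha hb
      exact absurd (hb ▸ ha ▸ haR) hbR
  | x :: y :: l, a, b, ha, hb, haR, hbR => by
      obtain rfl : x = a := by simpa using ha
      rw [pathEdges_cons_cons]
      by_cases hy : y ∈ R
      · obtain ⟨e, he, hR⟩ := exists_mem_pathEdges_mem_not_mem R (p := y :: l) rfl
          (by rwa [List.getLast?_cons_cons] at hb) hy hbR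
        exact ⟨e, List.mem_cons_of_mem _ he, hR⟩
      · exact ⟨(x, y), List.mem_cons_self, haR, hy⟩

def IsCut (F : Finset (V × V)) (s t : V) (C : Finset (V × V)) : Prop :=
  ∀ p, IsPath F s t p → ∃ e ∈ pathEdges p, e ∈ C

lemma isCut_filter_leaving (F : Finset (V × V)) {s t : V} {R : Set V} (hs : s ∈ R)
    (ht : t ∉ R) :
    IsCut F s t {e ∈ F | e.1 ∈ R ∧ e.2 ∉ R} := fun _ hp =>
  let ⟨e, he, hR⟩ := exists_mem_pathEdges_mem_not_mem R hp.2.1 hp.2.2.1 hs ht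
  ⟨e, he, Finset.mem_filter.2 ⟨hp.mem_of_mem_pathEdges he, hR⟩⟩

end Paths

section Flows

variable {V : Type*} [DecidableEq V]

def netInflow (S : Finset (V × V)) : V → ℤ :=
  ∑ e ∈ S, (Pi.single e.2 1 - Pi.single e.1 1)

/-- `S` is the support of a `0`/`1`-valued `s`-`t` flow of value `N`. -/
def IsUnitFlow (S : Finset (V × V)) (s t : V) (N : ℕ) : Prop :=
  netInflow S = N • (Pi.single t 1 - Pi.single s 1)

lemma netInflow_union {S T : Finset (V × V)} (h : Disjoint S T) :
    netInflow (S ∪ T) = netInflow S + netInflow T :=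
  sum_union h

lemma netInflow_sdiff {S T : Finset (V × V)} (h : T ⊆ S) :
    netInflow (S \ T) = netInflow S - netInflow T :=
  sum_sdiff_eq_sub h

lemma netInflow_image_swap (S : Finset (V × V)) :
    netInflow (S.image Prod.swap) = -netInflow S := by
  rw [netInflow, sum_image Prod.swap_injective.injOn, netInflow, ← sum_neg_distrib]
  simp

lemma sum_map_pathEdges_single_sub_single :
    ∀ {p : List V} {s t : V}, p.head? = some s → p.getLast? = some t →
      ((pathEdges p).map fun e => (Pi.single e.2 1 - Pi.single e.1 1 : V → ℤ)).sum =
        Pi.single t 1 - Pi.single s 1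
  | [], _, _, h, _ => by simp at h
  | [_], _, _, hs, ht => by
      simp only [List.head?_cons, List.getLast?_singleton, Option.some.injEq] at hs ht
      simp [pathEdges, ← hs, ← ht]
  | a :: b :: l, s, t, hs, ht => by
      obtain rfl : a = s := by simpa using hs
      rw [pathEdges_cons_cons, List.map_cons, List.sum_cons,
        sum_map_pathEdges_single_sub_single (p := b :: l) rfl
          (by rwa [List.getLast?_cons_cons] at ht)]
      abel

lemma IsPath.netInflow {E : Finset (V × V)} {s t : V} {p : List V} (hp : IsPath E s t p) :
    netInflow (pathEdges p).toFinset = Pi.single t 1 - Pi.single s 1 := by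
  rw [_root_.netInflow, List.sum_toFinset _ hp.2.2.2.pathEdges]
  exact sum_map_pathEdges_single_sub_single hp.2.1 hp.2.2.1

lemma IsUnitFlow.card_leaving {S : Finset (V × V)} {s t : V} {N : ℕ}
    (hS : IsUnitFlow S s t N) {R : Set V} (hs : s ∈ R) (ht : t ∉ R) :
    (#{e ∈ S | e.1 ∈ R ∧ e.2 ∉ R} : ℤ) = N + #{e ∈ S | e.1 ∉ R ∧ e.2 ∈ R} := by
  set R' : Finset V := {v ∈ insert s (S.image Prod.fst ∪ S.image Prod.snd) | v ∈ R}
  have hR' : ∀ e ∈ S, (e.1 ∈ R' ↔ e.1 ∈ R) ∧ (e.2 ∈ R' ↔ e.2 ∈ R) := by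
    intro e he
    simp only [R', mem_filter, mem_insert, mem_union, mem_image]
    exact ⟨⟨And.right, fun h => ⟨Or.inr (Or.inl ⟨e, he, rfl⟩), h⟩⟩,
      ⟨And.right, fun h => ⟨Or.inr (Or.inr ⟨e, he, rfl⟩), h⟩⟩⟩
  have hsum : ∑ v ∈ R', netInflow S v = -N := by
    have hsR' : s ∈ R' := mem_filter.2 ⟨mem_insert_self _ _, hs⟩
    have htR' : t ∉ R' := fun h => ht (mem_filter.1 h).2
    rw [show netInflow S = _ from hS]
    simp only [Pi.smul_apply, Pi.sub_apply, nsmul_eq_mul]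
    rw [← mul_sum, sum_sub_distrib, sum_pi_single', sum_pi_single', if_pos hsR', if_neg htR']
    ring
  have hcount : ∑ v ∈ R', netInflow S v =
      #{e ∈ S | e.1 ∉ R ∧ e.2 ∈ R} - #{e ∈ S | e.1 ∈ R ∧ e.2 ∉ R} := by
    simp only [netInflow, Finset.sum_apply, Pi.sub_apply]
    rw [sum_comm, card_filter, card_filter]
    push_cast
    rw [← sum_sub_distrib]
    refine sum_congr rfl fun e he => ?_
    rw [sum_sub_distrib, sum_pi_single', sum_pi_single']
    simp only [(hR' e he).1, (hR' e he).2]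
    by_cases h1 : e.1 ∈ R <;> by_cases h2 : e.2 ∈ R <;> simp [h1, h2]
  omega

lemma IsUnitFlow.exists_isPath_of_succ {S : Finset (V × V)} {s t : V} {N : ℕ}
    (hS : IsUnitFlow S s t (N + 1)) :
    ∃ q, IsPath S s t q ∧ IsUnitFlow (S \ (pathEdges q).toFinset) s t N := by
  have hreach : Relation.ReflTransGen (fun a b => (a, b) ∈ S) s t := by
    by_contra ht
    set R : Set V := {v | Relation.ReflTransGen (fun a b => (a, b) ∈ S) s v}
    have hflow := hS.card_leaving (R := R) Relation.ReflTransGen.refl ht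
    have hleave : {e ∈ S | e.1 ∈ R ∧ e.2 ∉ R} = ∅ :=
      filter_eq_empty_iff.2 fun e he h => h.2 (Relation.ReflTransGen.tail h.1 he)
    rw [hleave, card_empty] at hflow
    omega
  obtain ⟨q, hq⟩ := exists_isPath_of_reflTransGen hreach
  have hsub : (pathEdges q).toFinset ⊆ S := fun e he =>
    hq.mem_of_mem_pathEdges (List.mem_toFinset.1 he)
  refine ⟨q, hq, ?_⟩
  rw [IsUnitFlow, netInflow_sdiff hsub, hq.netInflow, show netInflow S = _ from hS, succ_nsmul,
    add_sub_cancel_right]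

lemma IsUnitFlow.exists_pairwise_disjoint_isPath {s t : V} :
    ∀ {S : Finset (V × V)} {N : ℕ}, IsUnitFlow S s t N →
      ∃ L : List (List V), L.length = N ∧ (∀ q ∈ L, IsPath S s t q) ∧
        L.Pairwise (List.Disjoint on pathEdges)
  | _, 0, _ => ⟨[], rfl, by simp, List.Pairwise.nil⟩
  | _, _ + 1, hS => by
    obtain ⟨q, hq, hS'⟩ := hS.exists_isPath_of_succ
    obtain ⟨L, hlen, hL, hdisj⟩ := hS'.exists_pairwise_disjoint_isPath
    refine ⟨q :: L, by simp [hlen], ?_, List.pairwise_cons.2 ⟨?_, hdisj⟩⟩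
    · rintro p (_ | ⟨_, hp⟩)
      · exact hq
      · exact (hL p hp).mono sdiff_subset
    · intro p hp e heq hep
      exact (mem_sdiff.1 ((hL p hp).mem_of_mem_pathEdges hep)).2 (List.mem_toFinset.2 heq)

def residualEdges (F S : Finset (V × V)) : Finset (V × V) :=
  F \ S ∪ S.image Prod.swap

lemma IsUnitFlow.reflTransGen_residualEdges {F S : Finset (V × V)} {s t : V} {N : ℕ}
    (hSF : S ⊆ F) (hS : IsUnitFlow S s t N) (hcut : ∀ C ⊆ F, IsCut F s t C → N + 1 ≤ #C) :
    Relation.ReflTransGen (fun a b => (a, b) ∈ residualEdges F S) s t := by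
  by_contra ht
  set R : Set V := {v | Relation.ReflTransGen (fun a b => (a, b) ∈ residualEdges F S) s v}
  have hs : s ∈ R := Relation.ReflTransGen.refl
  -- the `F`-edges leaving `R` form a cut saturated by `S`, and no edge of `S` enters `R`,
  -- so this cut would carry exactly `N` units of flow
  have hleave : {e ∈ S | e.1 ∈ R ∧ e.2 ∉ R} = {e ∈ F | e.1 ∈ R ∧ e.2 ∉ R} := by
    ext e
    simp only [mem_filter]
    refine ⟨fun h => ⟨hSF h.1, h.2⟩, fun h => ⟨by_contra fun heS => h.2.2 ?_, h.2⟩⟩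
    exact Relation.ReflTransGen.tail h.2.1 (mem_union_left _ (mem_sdiff.2 ⟨h.1, heS⟩))
  have henter : {e ∈ S | e.1 ∉ R ∧ e.2 ∈ R} = ∅ :=
    filter_eq_empty_iff.2 fun e he h =>
      h.1 (Relation.ReflTransGen.tail h.2 (mem_union_right _ (mem_image_of_mem _ he)))
  have hflow := hS.card_leaving hs ht
  have hcard := hcut _ (filter_subset _ _) (isCut_filter_leaving F hs ht)
  rw [hleave, henter, card_empty] at hflow
  omega

lemma IsUnitFlow.augment {F S : Finset (V × V)} {s t : V} {N : ℕ} (hSF : S ⊆ F)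
    (hS : IsUnitFlow S s t N) {q : List V} (hq : IsPath (residualEdges F S) s t q) :
    ∃ S' ⊆ F, IsUnitFlow S' s t (N + 1) := by
  set T := (pathEdges q).toFinset
  set fwd := {e ∈ T | e ∈ F \ S}
  set bwd := {e ∈ T | e ∉ F \ S}
  -- an edge of `q` outside `F \ S` runs backwards along an edge of `S`, which it cancels
  have hbwd : bwd.image Prod.swap ⊆ S := by
    intro e he
    obtain ⟨e', he', rfl⟩ := mem_image.1 he
    obtain ⟨hT, hnot⟩ := mem_filter.1 he'
    rcases mem_union.1 (hq.mem_of_mem_pathEdges (List.mem_toFinset.1 hT)) with h | h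
    · exact absurd h hnot
    · obtain ⟨e'', h'', rfl⟩ := mem_image.1 h
      simpa using h''
  have hdisj : Disjoint (S \ bwd.image Prod.swap) fwd :=
    disjoint_left.2 fun e he hf => (mem_sdiff.1 (mem_filter.1 hf).2).2 (mem_sdiff.1 he).1
  have hT : netInflow fwd + netInflow bwd = Pi.single t 1 - Pi.single s 1 := by
    rw [← netInflow_union (disjoint_filter_filter_not T T _), filter_union_filter_not_eq,
      hq.netInflow]
  refine ⟨S \ bwd.image Prod.swap ∪ fwd,
    union_subset (sdiff_subset.trans hSF) fun e he => (mem_sdiff.1 (mem_filter.1 he).2).1, ?_⟩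
  rw [IsUnitFlow, netInflow_union hdisj, netInflow_sdiff hbwd, netInflow_image_swap,
    show netInflow S = _ from hS, succ_nsmul, ← hT]
  abel

lemma exists_isUnitFlow {F : Finset (V × V)} {s t : V} :
    ∀ {N : ℕ}, (∀ C ⊆ F, IsCut F s t C → N ≤ #C) → ∃ S ⊆ F, IsUnitFlow S s t N
  | 0, _ => ⟨∅, empty_subset _, by simp [IsUnitFlow, netInflow]⟩
  | N + 1, hcut => by
    obtain ⟨S, hSF, hS⟩ := exists_isUnitFlow fun C hC h => (hcut C hC h).trans' N.le_succ
    obtain ⟨q, hq⟩ := exists_isPath_of_reflTransGen (hS.reflTransGen_residualEdges hSF hcut)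
    exact hS.augment hSF hq

theorem exists_pairwise_disjoint_isPath_of_le_card_cut {F : Finset (V × V)} {s t : V} {N : ℕ}
    (hcut : ∀ C ⊆ F, IsCut F s t C → N ≤ #C) :
    ∃ L : List (List V), L.length = N ∧ (∀ q ∈ L, IsPath F s t q) ∧
      L.Pairwise (List.Disjoint on pathEdges) := by
  obtain ⟨S, hSF, hS⟩ := exists_isUnitFlow hcut
  obtain ⟨L, hlen, hL, hdisj⟩ := hS.exists_pairwise_disjoint_isPath
  exact ⟨L, hlen, fun q hq => (hL q hq).mono hSF, hdisj⟩

end Flows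

section Counting

variable {V : Type*} [DecidableEq V]

lemma sum_map_sum_pathEdges_le_of_pairwise_disjoint {ℓ : V × V → ℝ} (hℓ : ∀ e, 0 ≤ ℓ e)
    {F : Finset (V × V)} {s t : V} {L : List (List V)}
    (hL : ∀ q ∈ L, IsPath F s t q) (hdisj : L.Pairwise (List.Disjoint on pathEdges)) :
    (L.map fun q => ((pathEdges q).map ℓ).sum).sum ≤ ∑ e ∈ F, ℓ e := by
  have hnodup : (L.flatMap pathEdges).Nodup :=
    List.nodup_flatMap.2 ⟨fun q hq => (hL q hq).2.2.2.pathEdges, hdisj⟩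
  have hsub : (L.flatMap pathEdges).toFinset ⊆ F := fun e he => by
    obtain ⟨q, hq, he⟩ := List.mem_flatMap.1 (List.mem_toFinset.1 he)
    exact (hL q hq).mem_of_mem_pathEdges he
  calc (L.map fun q => ((pathEdges q).map ℓ).sum).sum = ((L.flatMap pathEdges).map ℓ).sum := by
        rw [List.flatMap_def, List.map_flatten, List.sum_flatten, List.map_map, List.map_map]
        rfl
    _ = ∑ e ∈ (L.flatMap pathEdges).toFinset, ℓ e := (List.sum_toFinset ℓ hnodup).symm
    _ ≤ ∑ e ∈ F, ℓ e := sum_le_sum_of_subset_of_nonneg hsub fun e _ _ => hℓ e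

lemma IsCut.card_le_card_mul {ι : Type*} [Fintype ι] {F C : Finset (V × V)} {s t : V}
    (hC : IsCut F s t C) {P : ι → List V} (hP : ∀ i, IsPath F s t (P i)) {η : ℝ}
    (hcong : ∀ e, (#{i | e ∈ pathEdges (P i)} : ℝ) ≤ η) :
    (Fintype.card ι : ℝ) ≤ #C * η := by
  have hcover : (univ : Finset ι) ⊆ C.biUnion fun e => {i | e ∈ pathEdges (P i)} := by
    intro i _
    obtain ⟨e, he, heC⟩ := hC _ (hP i)
    exact mem_biUnion.2 ⟨e, heC, mem_filter.2 ⟨mem_univ _, he⟩⟩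
  calc (Fintype.card ι : ℝ) ≤ ∑ e ∈ C, (#{i | e ∈ pathEdges (P i)} : ℝ) := by
        exact_mod_cast (card_le_card hcover).trans card_biUnion_le
    _ ≤ ∑ _e ∈ C, η := sum_le_sum fun e _ => hcong e
    _ = #C * η := by rw [sum_const, nsmul_eq_mul]

/-- The subgraph `H*` of the statement. -/
def pathUnion {ι : Type*} [Fintype ι] (P : ι → List V) : Finset (V × V) :=
  univ.biUnion fun i => (pathEdges (P i)).toFinset

variable {ι : Type*} [Fintype ι] {P : ι → List V}

lemma mem_pathUnion {e : V × V} : e ∈ pathUnion P ↔ ∃ i, e ∈ pathEdges (P i) := by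
  simp [pathUnion]

lemma IsPath.pathUnion {E : Finset (V × V)} {s t : V} {i : ι} (hP : IsPath E s t (P i)) :
    IsPath (_root_.pathUnion P) s t (P i) :=
  ⟨isChain_iff_forall_mem_pathEdges.2 fun _ he => mem_pathUnion.2 ⟨i, he⟩, hP.2⟩

lemma pathUnion_subset {E : Finset (V × V)} {s t : V} (hP : ∀ i, IsPath E s t (P i)) :
    pathUnion P ⊆ E := fun _ he =>
  let ⟨i, hi⟩ := mem_pathUnion.1 he
  (hP i).mem_of_mem_pathEdges hi

lemma sum_pathUnion_le {ℓ : V × V → ℝ} (hℓ : ∀ e, 0 ≤ ℓ e)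
    (hP : ∀ i, (P i).Nodup) :
    ∑ e ∈ pathUnion P, ℓ e ≤ ∑ i, ((pathEdges (P i)).map ℓ).sum :=
  (sum_biUnion_le_sum_sum hℓ _ _).trans_eq <|
    sum_congr rfl fun i _ => List.sum_toFinset _ (hP i).pathEdges

end Counting

/-- Let `H` be a directed graph with `s, t`, and a collection `P'` of `k` simple
`s`-`t` paths, each of total length at most `1/(32 log m)`, such that the paths in
`P'` cause edge-congestion at most `log m`. Then the subgraph `H*` consisting of the
union of the edges of paths in `P'` contains a collection of at least `k/(2 log m)`
edge-disjoint `s`-`t` paths, each of total length at most `1/8` (edge lengths in `H*`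
equal those in `H`). -/
theorem stmt7 {V : Type*} [DecidableEq V] (E : Finset (V × V)) (s t : V)
    (ℓ : V × V → ℝ) (m k : ℕ) (P : Fin k → List V)
    (hℓ : ∀ e, 0 ≤ ℓ e) (hm : 2 ≤ m)
    (hpath : ∀ i, IsPath E s t (P i))
    (hshort : ∀ i, ((pathEdges (P i)).map ℓ).sum ≤ 1 / (32 * Real.logb 2 (m : ℝ)))
    (hcong : ∀ e : V × V,
      ((Finset.univ.filter (fun i : Fin k => e ∈ pathEdges (P i))).card : ℝ) ≤
        Real.logb 2 (m : ℝ)) :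
    ∃ (r : ℕ) (Q : Fin r → List V),
      (k : ℝ) / (2 * Real.logb 2 (m : ℝ)) ≤ (r : ℝ) ∧
      (∀ j, IsPath E s t (Q j)) ∧
      (∀ j, ∀ e ∈ pathEdges (Q j), ∃ i, e ∈ pathEdges (P i)) ∧
      (∀ j, ((pathEdges (Q j)).map ℓ).sum ≤ 1 / 8) ∧
      (∀ j j', j ≠ j' → ∀ e ∈ pathEdges (Q j), e ∉ pathEdges (Q j')) := by
  set η := Real.logb 2 (m : ℝ)
  have hη : 0 < η := Real.logb_pos one_lt_two (by exact_mod_cast hm)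
  have hPF : ∀ i, IsPath (pathUnion P) s t (P i) := fun i => (hpath i).pathUnion
  have hlenF : ∑ e ∈ pathUnion P, ℓ e ≤ k / η / 32 :=
    (sum_pathUnion_le hℓ fun i => (hpath i).2.2.2).trans <|
      (sum_le_sum fun i _ => hshort i).trans_eq
        (by rw [sum_const, card_univ, Fintype.card_fin, nsmul_eq_mul]; ring)
  obtain ⟨L, hLlen, hL, hdisj⟩ :=
    exists_pairwise_disjoint_isPath_of_le_card_cut (N := ⌈k / η⌉₊) fun C _ hC =>
      Nat.ceil_le.2 <| (div_le_iff₀ hη).2 <| by simpa using hC.card_le_card_mul hPF hcong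
  set Ls := L.filter fun q => ((pathEdges q).map ℓ).sum ≤ 1 / 8
  have hLs : ∀ j, IsPath (pathUnion P) s t (Ls.get j) := fun j =>
    hL _ (List.mem_of_mem_filter (Ls.get_mem j))
  have hcount : k / (2 * η) ≤ Ls.length := by
    have hN : k / η ≤ L.length := hLlen ▸ Nat.le_ceil _
    have htotal := (sum_map_sum_pathEdges_le_of_pairwise_disjoint hℓ hL hdisj).trans hlenF
    have hfilter := List.length_sub_sum_div_le_length_filter
      (f := fun q => ((pathEdges q).map ℓ).sum) (by norm_num : (0 : ℝ) < 1 / 8) L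
      fun q _ => List.sum_nonneg fun x hx => by
        obtain ⟨e, -, rfl⟩ := List.mem_map.1 hx
        exact hℓ e
    have hk : 0 ≤ (k : ℝ) / η := by positivity
    rw [div_mul_eq_div_div_swap]
    linarith
  refine ⟨Ls.length, Ls.get, hcount, fun j => (hLs j).mono (pathUnion_subset hpath),
    fun j e he => mem_pathUnion.1 ((hLs j).mem_of_mem_pathEdges he),
    fun j => by simpa using List.of_mem_filter (Ls.get_mem j),
    fun j j' hne => (hdisj.sublist List.filter_sublist).rel_get_of_ne (fun _ _ h => h.symm) hne⟩
end

section
/- Let P be a simple path in a directed graph G equipped with an approximate topological order (X, ρ), such that all edges of P connecting distinct clusters are either left-to-right edges or right-to-left edges as defined by the interval order. Then the sum over edges e of P of skip(e) is at most n + 2·Σ_{e ∈ E(G)} span(e), where n is the number of vertices. -/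
/-!
Give every vertex `v` the potential `z (cl v)`, the right end of its cluster's interval, which
lies in `[0, n]`. Edge by edge, `skip(e)` is at most the increase of the potential along `e`
plus `2 · span(e)`. Along a path the increases telescope to at most `n`, and since a simple
path uses each edge of `E` at most once, its spans sum to at most `∑_{e ∈ E} span(e)`.
-/

/-- The `skip` value of an edge `(x,y)` with respect to an approximate topological
order given by a cluster map `cl` and interval endpoints `a` (first) and `z` (last). -/
def skip {V ι : Type*} [DecidableEq ι] (cl : V → ι) (a z : ι → ℤ) (x y : V) : ℤ :=
  if cl x = cl y then 0
  else if z (cl x) < a (cl y) then a (cl y) - z (cl x)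
  else a (cl x) - z (cl y)

/-- The `span` value of an edge `(x,y)` with respect to an approximate topological
order: nonzero only for right-to-left edges. -/
def spanE {V ι : Type*} [DecidableEq ι] (cl : V → ι) (a z : ι → ℤ) (x y : V) : ℤ :=
  if cl x = cl y then 0
  else if z (cl x) < a (cl y) then 0
  else z (cl x) - a (cl y)

namespace List

variable {α : Type*}

theorem IsChain.rel_of_mem_zip_tail {R : α → α → Prop} :
    ∀ {l : List α}, l.IsChain R → ∀ {e : α × α}, e ∈ l.zip l.tail → R e.1 e.2
  | [], _, _, he | [_], _, _, he => by simp at he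
  | x :: y :: l, hl, e, he => by
    rw [isChain_cons_cons] at hl
    rcases mem_cons.mp he with rfl | he
    · exact hl.1
    · exact hl.2.rel_of_mem_zip_tail he

theorem Nodup.zip_tail {l : List α} (hl : l.Nodup) : (l.zip l.tail).Nodup := by
  refine Nodup.of_map Prod.snd ?_
  rw [map_snd_zip (by simp)]
  exact hl.sublist l.tail_sublist

theorem sum_zip_tail_sub {G : Type*} [AddCommGroup G] (f : α → G) :
    ∀ (x : α) (l : List α),
      (((x :: l).zip l).map fun e => f e.2 - f e.1).sum = f ((x :: l).getLast (cons_ne_nil x l)) - f x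
  | _, [] => by simp
  | x, y :: l => by
    rw [zip_cons_cons, map_cons, sum_cons, sum_zip_tail_sub f y l, getLast_cons (cons_ne_nil y l)]
    abel

theorem sum_zip_tail_sub_le {G : Type*} [AddCommGroup G] [PartialOrder G] [IsOrderedAddMonoid G]
    (f : α → G) {c : G} (hc : 0 ≤ c) (hf : ∀ x y, f y - f x ≤ c) :
    ∀ l : List α, ((l.zip l.tail).map fun e => f e.2 - f e.1).sum ≤ c
  | [] => by simpa using hc
  | x :: l => by rw [tail_cons, sum_zip_tail_sub]; exact hf _ _

theorem sum_map_le_finset_sum_of_nodup {M : Type*} [AddCommMonoid M] [PartialOrder M]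
    [IsOrderedAddMonoid M] {l : List α} {s : Finset α} {f : α → M} (hl : l.Nodup)
    (hls : ∀ x ∈ l, x ∈ s) (hf : ∀ x ∈ s, 0 ≤ f x) : (l.map f).sum ≤ ∑ x ∈ s, f x := by
  classical
  rw [← sum_toFinset f hl]
  exact Finset.sum_le_sum_of_subset_of_nonneg (fun x hx => hls x (mem_toFinset.mp hx))
    fun x hx _ => hf x hx

end List

section ApproximateTopologicalOrder

variable {V ι : Type*} [DecidableEq ι] (cl : V → ι) (a z : ι → ℤ)

theorem spanE_nonneg (x y : V) : 0 ≤ spanE cl a z x y := by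
  unfold spanE; split_ifs <;> omega

theorem skip_le_sub_add_two_mul_spanE (haz : ∀ i, a i ≤ z i) (x y : V) :
    skip cl a z x y ≤ z (cl y) - z (cl x) + 2 * spanE cl a z x y := by
  have hx := haz (cl x)
  have hy := haz (cl y)
  unfold skip spanE
  split_ifs with h
  · rw [h]; omega
  all_goals omega

end ApproximateTopologicalOrder

theorem stmt10_general {V ι : Type*} [DecidableEq ι] (E : Finset (V × V))
    (cl : V → ι) (a z : ι → ℤ) (n : ℕ)
    (hiv : ∀ i, 1 ≤ a i ∧ a i ≤ z i ∧ z i ≤ (n : ℤ))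
    (p : List V)
    (hchain : p.Chain' (fun u v => (u, v) ∈ E))
    (hsimple : p.Nodup) :
    ((p.zip p.tail).map (fun e => skip cl a z e.1 e.2)).sum ≤
      (n : ℤ) + 2 * ∑ e ∈ E, spanE cl a z e.1 e.2 := by
  have hpotential : ∀ x y : V, z (cl y) - z (cl x) ≤ n := fun x y => by
    have := hiv (cl x); have := hiv (cl y); omega
  calc ((p.zip p.tail).map fun e => skip cl a z e.1 e.2).sum
      ≤ ((p.zip p.tail).map fun e => z (cl e.2) - z (cl e.1) + 2 * spanE cl a z e.1 e.2).sum :=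
        List.sum_le_sum fun e _ =>
          skip_le_sub_add_two_mul_spanE cl a z (fun i => (hiv i).2.1) e.1 e.2
    _ = ((p.zip p.tail).map fun e => z (cl e.2) - z (cl e.1)).sum
          + 2 * ((p.zip p.tail).map fun e => spanE cl a z e.1 e.2).sum := by
        rw [List.sum_map_add, List.sum_map_mul_left]
    _ ≤ n + 2 * ∑ e ∈ E, spanE cl a z e.1 e.2 := by
        gcongr
        · exact List.sum_zip_tail_sub_le (fun v => z (cl v)) (Int.natCast_nonneg n) hpotential p
        · exact List.sum_map_le_finset_sum_of_nodup hsimple.zip_tail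
            (fun e he => hchain.rel_of_mem_zip_tail he) fun e _ => spanE_nonneg cl a z e.1 e.2

/-- Let `P` be a simple path in a directed graph `G` equipped with an approximate
topological order (clusters with mutually disjoint contiguous intervals inside
`{1,...,n}`, where `n` is the number of vertices). Then the sum over edges `e` of `P`
of `skip(e)` is at most `n + 2·Σ_{e ∈ E(G)} span(e)`. -/
theorem stmt10 {V ι : Type*} [Fintype V] [DecidableEq ι] (E : Finset (V × V))
    (cl : V → ι) (a z : ι → ℤ) (n : ℕ)
    (hn : n = Fintype.card V)
    (hiv : ∀ i, 1 ≤ a i ∧ a i ≤ z i ∧ z i ≤ (n : ℤ))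
    (hdisj : ∀ i j, i ≠ j → z i < a j ∨ z j < a i)
    (p : List V)
    (hchain : p.Chain' (fun u v => (u, v) ∈ E))
    (hsimple : p.Nodup) :
    ((p.zip p.tail).map (fun e => skip cl a z e.1 e.2)).sum ≤
      (n : ℤ) + 2 * ∑ e ∈ E, spanE cl a z e.1 e.2 :=
  stmt10_general E cl a z n hiv p hchain hsimple
end

section
/- Let H = (L,R,E) be a directed bipartite graph with regular edges from L to R and special edges from R to L, each vertex incident to at most one special edge. Let v ∈ R, n = |V(H)|, and d ≥ 2^{11} log n. If for every even index i with 1 < i ≤ d−1 one has |E(S_i, V∖S_i)| > (64 log n / d)·|S_i|, where S_i is the ball of radius i around v, then |S_{d-1}| > n, a contradiction; hence some even index i ≤ d−1 satisfies |E(S_i, V∖S_i)| ≤ (64 log n / d)·|S_i|. -/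
/-!
If every even ball `S_i` had a large edge boundary, the balls would grow geometrically. Only
special edges can leave an even ball (a regular edge `(a, b)` with `a ∈ S_i` has `a ∈ L`, so `a`
is reached by an odd walk of length `< i`, and then `b ∈ S_i`), and since no vertex carries two
special edges their heads are distinct new vertices of `S_{i+1}`. Hence
`|S_{i+2}| ≥ (1 + c) |S_i|` with `c = 64 log n / d`, and after about `d / 2` steps
`(1 + c)^{d/2} > n`, which is impossible.
-/

open scoped Classical

/-- `hasWalk E k x y` means there is a directed walk with exactly `k` edges from
`x` to `y` in the directed graph with edge set `E`. -/
def hasWalk {V : Type*} (E : Finset (V × V)) : ℕ → V → V → Prop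
  | 0, x, y => x = y
  | n + 1, x, y => ∃ z, (x, z) ∈ E ∧ hasWalk E n z y

open Finset

section Walks

variable {V : Type*} {E : Finset (V × V)}

theorem hasWalk.snoc {k : ℕ} {x y z : V} (h : hasWalk E k x y) (hyz : (y, z) ∈ E) :
    hasWalk E (k + 1) x z := by
  induction k generalizing x with
  | zero => exact ⟨z, (h : x = y) ▸ hyz, rfl⟩
  | succ k ih =>
    obtain ⟨w, hxw, hw⟩ := h
    exact ⟨w, hxw, ih hw⟩

theorem hasWalk.mem_ite_even {A B : Finset V} (hAB : Disjoint A B)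
    (hE : ∀ e ∈ E, (e.1 ∈ A ∧ e.2 ∈ B) ∨ (e.1 ∈ B ∧ e.2 ∈ A)) {k : ℕ} {x u : V}
    (h : hasWalk E k x u) (hx : x ∈ A) : u ∈ if Even k then A else B := by
  induction k generalizing x A B with
  | zero =>
    obtain rfl : x = u := h
    simpa using hx
  | succ k ih =>
    obtain ⟨z, hxz, hz⟩ := h
    have hzB : z ∈ B := by
      rcases hE _ hxz with ⟨-, hz⟩ | ⟨hxB, -⟩
      · exact hz
      · exact absurd hxB (disjoint_left.1 hAB hx)
    have := ih hAB.symm (fun e he => (hE e he).symm) hz hzB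
    by_cases hk : Even k <;> simp_all [Nat.even_add_one]

end Walks

section Balls

variable {V : Type*} [Fintype V] (E : Finset (V × V)) (v : V)

noncomputable def walkBall (i : ℕ) : Finset V :=
  Finset.univ.filter (fun u => ∃ k ≤ i, hasWalk E k v u)

noncomputable def edgeBoundary (s : Finset V) : Finset (V × V) :=
  E.filter (fun e => e.1 ∈ s ∧ e.2 ∉ s)

variable {E v}

theorem mem_walkBall {i : ℕ} {u : V} : u ∈ walkBall E v i ↔ ∃ k ≤ i, hasWalk E k v u := by
  simp [walkBall]

theorem self_mem_walkBall (i : ℕ) : v ∈ walkBall E v i :=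
  mem_walkBall.2 ⟨0, i.zero_le, rfl⟩

theorem walkBall_mono : Monotone (walkBall E v) := fun _ _ hij _ hu =>
  let ⟨k, hk, hw⟩ := mem_walkBall.1 hu
  mem_walkBall.2 ⟨k, hk.trans hij, hw⟩

theorem snd_mem_walkBall_succ {i : ℕ} {e : V × V} (he : e ∈ E) (hfst : e.1 ∈ walkBall E v i) :
    e.2 ∈ walkBall E v (i + 1) :=
  let ⟨k, hk, hw⟩ := mem_walkBall.1 hfst
  mem_walkBall.2 ⟨k + 1, by omega, hw.snoc he⟩

theorem mem_edgeBoundary_walkBall_of_even {L R : Finset V} (hLR : Disjoint L R)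
    (hbip : ∀ e ∈ E, (e.1 ∈ L ∧ e.2 ∈ R) ∨ (e.1 ∈ R ∧ e.2 ∈ L)) (hv : v ∈ R) {i : ℕ}
    (hi : Even i) {e : V × V} (he : e ∈ edgeBoundary E (walkBall E v i)) : e.1 ∈ R ∧ e.2 ∈ L := by
  obtain ⟨heE, h1, h2⟩ := mem_filter.1 he
  refine (hbip e heE).resolve_left fun ⟨h1L, _⟩ => h2 ?_
  obtain ⟨k, hk, hw⟩ := mem_walkBall.1 h1
  have hk_odd : Odd k := by
    have := hw.mem_ite_even hLR.symm (fun e he => (hbip e he).symm) hv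
    by_contra hk
    rw [if_pos (Nat.not_odd_iff_even.1 hk)] at this
    exact disjoint_left.1 hLR h1L this
  exact walkBall_mono (by grind) (snd_mem_walkBall_succ heE (mem_walkBall.2 ⟨k, le_rfl, hw⟩))

theorem card_edgeBoundary_walkBall_add_card_le {L R : Finset V} (hLR : Disjoint L R)
    (hbip : ∀ e ∈ E, (e.1 ∈ L ∧ e.2 ∈ R) ∨ (e.1 ∈ R ∧ e.2 ∈ L))
    (hspec : ∀ w : V,
      (E.filter (fun e => (e.1 ∈ R ∧ e.2 ∈ L) ∧ (e.1 = w ∨ e.2 = w))).card ≤ 1)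
    (hv : v ∈ R) {i : ℕ} (hi : Even i) :
    #(edgeBoundary E (walkBall E v i)) + #(walkBall E v i) ≤ #(walkBall E v (i + 2)) := by
  have hspecial {e} := mem_edgeBoundary_walkBall_of_even (e := e) hLR hbip hv hi
  have hheads :
      #(edgeBoundary E (walkBall E v i)) ≤ #(walkBall E v (i + 2) \ walkBall E v i) := by
    refine card_le_card_of_injOn Prod.snd (fun e he => ?_) (fun e he e' he' hee' => ?_)
    · obtain ⟨heE, h1, h2⟩ := mem_filter.1 he
      exact mem_sdiff.2 ⟨walkBall_mono (by omega) (snd_mem_walkBall_succ heE h1), h2⟩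
    · -- both edges are special edges at the vertex `e.2`
      refine card_le_one.1 (hspec e.2) e ?_ e' ?_
      · exact mem_filter.2 ⟨(mem_filter.1 he).1, hspecial he, Or.inr rfl⟩
      · exact mem_filter.2 ⟨(mem_filter.1 he').1, hspecial he', Or.inr hee'.symm⟩
  rw [← card_sdiff_add_card_eq_card (walkBall_mono (by omega : i ≤ i + 2))]
  omega

end Balls

theorem pow_mul_le_of_forall_mul_le {α : Type*} [Semiring α] [PartialOrder α] [IsOrderedRing α]
    {r : α} (hr : 0 ≤ r) {a : ℕ → α} {t : ℕ} (h : ∀ j < t, r * a j ≤ a (j + 1)) :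
    r ^ t * a 0 ≤ a t := by
  induction t with
  | zero => simp
  | succ t ih =>
    calc r ^ (t + 1) * a 0 = r * (r ^ t * a 0) := by rw [pow_succ', mul_assoc]
      _ ≤ r * a t := mul_le_mul_of_nonneg_left (ih fun j hj => h j (by omega)) hr
      _ ≤ a (t + 1) := h t (by omega)

theorem one_le_logb_two {x : ℝ} (hx : 2 ≤ x) : 1 ≤ Real.logb 2 x :=
  (Real.le_logb_iff_rpow_le one_lt_two (by linarith)).2 (by simpa using hx)

theorem lt_one_add_logb_div_pow {x : ℝ} (hx : 2 ≤ x) {d : ℕ}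
    (hd : 2 ^ 11 * Real.logb 2 x ≤ d) :
    x < (1 + 64 * Real.logb 2 x / d) ^ ((d - 2) / 2) := by
  set ℓ := Real.logb 2 x
  set c := 64 * ℓ / d
  set t := (d - 2) / 2
  have hℓ : 1 ≤ ℓ := one_le_logb_two hx
  have hd_pos : (0 : ℝ) < d := by linarith
  have hc_pos : 0 < c := by positivity
  have hcd : c * d = 64 * ℓ := div_mul_cancel₀ _ hd_pos.ne'
  have hc_small : c ≤ 1 / 32 := by
    rw [div_le_iff₀ hd_pos]; linarith
  have ht : (d : ℝ) - 3 ≤ 2 * t := by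
    have : d ≤ 2 * t + 3 := by omega
    have : (d : ℝ) ≤ 2 * t + 3 := by exact_mod_cast this
    linarith
  have hlog_c : c / 2 ≤ Real.log (1 + c) := by
    refine le_trans ?_ (Real.le_log_one_add_of_nonneg hc_pos.le)
    rw [le_div_iff₀ (by linarith)]; nlinarith
  have hlog_x : Real.log x ≤ ℓ := by
    have hx_eq : Real.log x = ℓ * Real.log 2 := by
      simp only [ℓ, Real.logb, div_mul_cancel₀ _ (Real.log_pos one_lt_two).ne']
    have := Real.log_two_lt_d9
    rw [hx_eq]; nlinarith
  have htc : 32 * ℓ - 1 ≤ t * c := by nlinarith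
  rw [← Real.log_lt_log_iff (by linarith) (by positivity), Real.log_pow]
  calc Real.log x ≤ ℓ := hlog_x
    _ < t * (c / 2) := by linarith
    _ ≤ t * Real.log (1 + c) := mul_le_mul_of_nonneg_left hlog_c t.cast_nonneg

/-- Let `H = (L,R,E)` be a directed bipartite graph with regular edges from `L` to `R`
and special edges from `R` to `L`, each vertex incident to at most one special edge.
Let `v ∈ R`, `n = |V(H)|`, and `d ≥ 2^{11} log n`. Then some even index `i` with
`1 < i ≤ d−1` satisfies `|E(S_i, V∖S_i)| ≤ (64 log n / d)·|S_i|`, where `S_i` is the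
ball of radius `i` around `v` (otherwise `|S_{d-1}| > n`, a contradiction). -/
theorem stmt13 {V : Type*} [Fintype V] (E : Finset (V × V)) (L R : Finset V)
    (hLR : Disjoint L R)
    (hbip : ∀ e ∈ E, (e.1 ∈ L ∧ e.2 ∈ R) ∨ (e.1 ∈ R ∧ e.2 ∈ L))
    (hspec : ∀ w : V,
      (E.filter (fun e => (e.1 ∈ R ∧ e.2 ∈ L) ∧ (e.1 = w ∨ e.2 = w))).card ≤ 1)
    (v : V) (hv : v ∈ R) (n d : ℕ)
    (hn : n = Fintype.card V) (hn2 : 2 ≤ n)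
    (hd : (2 : ℝ) ^ 11 * Real.logb 2 (n : ℝ) ≤ (d : ℝ))
    (S : ℕ → Finset V)
    (hS : ∀ i, S i = Finset.univ.filter (fun u => ∃ k ≤ i, hasWalk E k v u)) :
    ∃ i, Even i ∧ 1 < i ∧ i ≤ d - 1 ∧
      ((E.filter (fun e => e.1 ∈ S i ∧ e.2 ∉ S i)).card : ℝ) ≤
        (64 * Real.logb 2 (n : ℝ) / (d : ℝ)) * ((S i).card : ℝ) := by
  obtain rfl : S = walkBall E v := funext hS
  by_contra! hcon
  set c := 64 * Real.logb 2 n / d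
  set t := (d - 2) / 2
  have hgrowth : ∀ j < t,
      (1 + c) * #(walkBall E v (2 * j + 2)) ≤ (#(walkBall E v (2 * (j + 1) + 2)) : ℝ) := by
    intro j hj
    have hi : Even (2 * j + 2) := ⟨j + 1, by ring⟩
    have hlarge :
        c * #(walkBall E v (2 * j + 2)) < (#(edgeBoundary E (walkBall E v (2 * j + 2))) : ℝ) :=
      hcon (2 * j + 2) hi (by omega) (by omega)
    have hsum : (#(edgeBoundary E (walkBall E v (2 * j + 2))) : ℝ) + #(walkBall E v (2 * j + 2))
        ≤ #(walkBall E v (2 * (j + 1) + 2)) := by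
      exact_mod_cast card_edgeBoundary_walkBall_add_card_le hLR hbip hspec hv hi
    linarith
  have hc : 0 ≤ 1 + c :=
    add_nonneg zero_le_one (by have := one_le_logb_two (x := n) (by exact_mod_cast hn2); positivity)
  have hball₂ : (1 : ℝ) ≤ #(walkBall E v 2) := by
    exact_mod_cast card_pos.2 ⟨v, self_mem_walkBall 2⟩
  refine lt_irrefl (n : ℝ) ?_
  calc (n : ℝ) < (1 + c) ^ t := lt_one_add_logb_div_pow (by exact_mod_cast hn2) hd
    _ ≤ (1 + c) ^ t * #(walkBall E v 2) := le_mul_of_one_le_right (pow_nonneg hc t) hball₂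
    _ ≤ #(walkBall E v (2 * t + 2)) := pow_mul_le_of_forall_mul_le hc hgrowth
    _ ≤ n := by exact_mod_cast hn ▸ card_le_univ _
end

section
/- Let W be an n-vertex directed α₀-expander (for constant α₀ > 0), and suppose E* ⊆ E(W) with |E*| ≤ α₀·n/32. Suppose V(W) is partitioned into sets X_1,...,X_r, X_{r+1} such that for each j ≤ r, writing X'_j = X_{j+1} ∪ ... ∪ X_{r+1}, either |E_{W∖E*}(X_j, X'_j)| ≤ (α₀/2^{20})·|X_j| or |E_{W∖E*}(X'_j, X_j)| ≤ (α₀/2^{20})·|X_j|, and each |X_j| ≤ n/2. Then |X_{r+1}| ≥ n/4. -/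
open scoped Classical

/-!
Suppose the last part is small. Since every other part has at most `n/2` vertices, some
initial segment `U = X₀ ∪ ⋯ ∪ Xₖ` with `k < r` has between `n/4` and `3n/4` vertices. Orient the
sparse cut of each part `Xⱼ` (`j ≤ k`): forwards if few edges go from `Xⱼ` to the later parts,
backwards otherwise. An edge between two parts lies in the sparse cut of the earlier one as
soon as it runs along that cut's orientation, so few edges of `W ∖ E*` leave the union of the
forward parts of `U`, and few enter the union of its backward parts. The larger of these two
unions has at least `n/8` vertices and misses all of `Uᶜ`, so it is one side of a balanced cut
crossed by at most `|E*| + α₀ n / 2²⁰ < α₀ n / 8` edges of `W`, contradicting expansion.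
-/

open Finset

section

variable {V : Type*} [DecidableEq V]

def edgesFromTo (E : Finset (V × V)) (A B : Finset V) : Finset (V × V) :=
  E.filter fun e => e.1 ∈ A ∧ e.2 ∈ B

lemma card_edgesFromTo_le_card_add_card_sdiff (E F : Finset (V × V)) (A B : Finset V) :
    #(edgesFromTo E A B) ≤ #F + #(edgesFromTo (E \ F) A B) := by
  have hsub : edgesFromTo E A B \ F ⊆ edgesFromTo (E \ F) A B := by
    intro e he
    simp only [edgesFromTo, mem_sdiff, mem_filter] at he ⊢
    exact ⟨⟨he.1.1, he.2⟩, he.1.2⟩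
  calc #(edgesFromTo E A B) ≤ #(edgesFromTo E A B \ F) + #F := card_le_card_sdiff_add_card
    _ ≤ #F + #(edgesFromTo (E \ F) A B) := by rw [add_comm]; gcongr

def IsDirectedExpander [Fintype V] (W : Finset (V × V)) (α : ℝ) : Prop :=
  ∀ A B : Finset V, A.Nonempty → B.Nonempty → Disjoint A B → A ∪ B = univ →
    α * min (#A : ℝ) #B ≤ #(edgesFromTo W A B)

lemma IsDirectedExpander.lt_card_edgesFromTo_sdiff [Fintype V] {W F : Finset (V × V)} {α : ℝ}
    (hW : IsDirectedExpander W α) (hα : 0 < α) (hV : 0 < Fintype.card V)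
    (hF : (#F : ℝ) ≤ α * Fintype.card V / 32) {A B : Finset V} (hAB : Disjoint A B)
    (hcover : A ∪ B = univ) (hA : (Fintype.card V : ℝ) / 8 ≤ #A)
    (hB : (Fintype.card V : ℝ) / 8 ≤ #B) :
    α / 2 ^ 20 * Fintype.card V < #(edgesFromTo (W \ F) A B) := by
  have hV' : (0 : ℝ) < Fintype.card V := by exact_mod_cast hV
  have hV8 : (0 : ℝ) < Fintype.card V / 8 := by positivity
  have hexp := hW A B (card_pos.1 (by exact_mod_cast hV8.trans_le hA))
    (card_pos.1 (by exact_mod_cast hV8.trans_le hB)) hAB hcover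
  have hmin : α * (Fintype.card V / 8) ≤ α * min (#A : ℝ) #B := by gcongr; exact le_min hA hB
  have hsplit : (#(edgesFromTo W A B) : ℝ) ≤ #F + #(edgesFromTo (W \ F) A B) := by
    exact_mod_cast card_edgesFromTo_le_card_add_card_sdiff W F A B
  linarith [mul_pos hα hV']

lemma exists_le_sum_filter_le_le_add {ι : Type*} [LinearOrder ι] (w : ι → ℝ) {a b : ℝ}
    (ha : 0 < a) (s : Finset ι) (hs : a ≤ ∑ j ∈ s, w j) (hw : ∀ j ∈ s, w j ≤ b) :
    ∃ k ∈ s, a ≤ ∑ j ∈ s with j ≤ k, w j ∧ ∑ j ∈ s with j ≤ k, w j ≤ a + b := by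
  induction s using Finset.induction_on_max with
  | empty => simp only [sum_empty] at hs; linarith
  | insert m t hlt ih =>
    have hm : m ∉ t := fun h => (hlt m h).false
    rw [sum_insert hm] at hs
    by_cases ht : a ≤ ∑ j ∈ t, w j
    · obtain ⟨k, hk, hbounds⟩ := ih ht fun j hj => hw j (mem_insert_of_mem hj)
      have hmk : ¬ m ≤ k := not_le.2 (hlt k hk)
      exact ⟨k, mem_insert_of_mem hk, by rwa [filter_insert, if_neg hmk]⟩
    · have hall : (insert m t).filter (· ≤ m) = insert m t :=
        filter_true_of_mem fun j hj => (mem_insert.1 hj).elim le_of_eq fun h => (hlt j h).le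
      refine ⟨m, mem_insert_self m t, ?_⟩
      rw [hall, sum_insert hm]
      exact ⟨hs, by linarith [hw m (mem_insert_self m t)]⟩

section Partition

variable {ι : Type*} [LinearOrder ι] [Fintype ι] (X : ι → Finset V)

def laterParts (j : ι) : Finset V := (univ.filter (j < ·)).biUnion X

noncomputable def orientedCut (E : Finset (V × V)) (p : ι → Prop) (j : ι) : Finset (V × V) :=
  if p j then edgesFromTo E (X j) (laterParts X j) else edgesFromTo E (laterParts X j) (X j)

variable {X}

lemma mem_orientedCut_min {E : Finset (V × V)} {p : ι → Prop} {e : V × V} {a b : ι}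
    (he : e ∈ E) (ha : e.1 ∈ X a) (hb : e.2 ∈ X b) (hab : a ≠ b)
    (hlt : a < b → p a) (hgt : b < a → ¬ p b) :
    e ∈ orientedCut X E p (min a b) := by
  rcases hab.lt_or_gt with h | h
  · rw [min_eq_left h.le, orientedCut, if_pos (hlt h)]
    exact mem_filter.2 ⟨he, ha, mem_biUnion.2 ⟨b, mem_filter.2 ⟨mem_univ b, h⟩, hb⟩⟩
  · rw [min_eq_right h.le, orientedCut, if_neg (hgt h)]
    exact mem_filter.2 ⟨he, mem_biUnion.2 ⟨a, mem_filter.2 ⟨mem_univ a, h⟩, ha⟩, hb⟩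

lemma card_orientedCut_le {E : Finset (V × V)} {c : ℝ} {j : ι}
    (h : (#(edgesFromTo E (X j) (laterParts X j)) : ℝ) ≤ c * #(X j) ∨
      (#(edgesFromTo E (laterParts X j) (X j)) : ℝ) ≤ c * #(X j)) :
    (#(orientedCut X E (fun i => (#(edgesFromTo E (X i) (laterParts X i)) : ℝ) ≤ c * #(X i))
      j) : ℝ) ≤ c * #(X j) := by
  unfold orientedCut
  split_ifs with hp
  · exact hp
  · exact h.resolve_left hp

variable {I : Finset ι} (E : Finset (V × V)) (p : ι → Prop)

lemma card_le_of_subset_biUnion_orientedCut (hdisj : ∀ i j, i ≠ j → Disjoint (X i) (X j))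
    {c : ℝ} (hsparse : ∀ j ∈ I, (#(orientedCut X E p j) : ℝ) ≤ c * #(X j))
    {C : Finset (V × V)} (hC : C ⊆ I.biUnion (orientedCut X E p)) :
    (#C : ℝ) ≤ c * #(I.biUnion X) := by
  calc (#C : ℝ) ≤ ∑ j ∈ I, (#(orientedCut X E p j) : ℝ) := by
        exact_mod_cast (card_le_card hC).trans card_biUnion_le
    _ ≤ ∑ j ∈ I, c * #(X j) := sum_le_sum hsparse
    _ = c * #(I.biUnion X) := by
        rw [← mul_sum, card_biUnion fun i _ j _ h => hdisj i j h, Nat.cast_sum]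

variable [Fintype V] (hI : IsLowerSet (I : Set ι))
include hI

lemma edgesFromTo_biUnion_filter_compl_subset (hcover : univ.biUnion X = univ) :
    edgesFromTo E ((I.filter p).biUnion X) ((I.filter p).biUnion X)ᶜ ⊆
      I.biUnion (orientedCut X E p) := by
  intro e he
  simp only [edgesFromTo, mem_filter, mem_compl, mem_biUnion] at he
  obtain ⟨heE, ⟨a, ⟨haI, hpa⟩, ha⟩, hout⟩ := he
  obtain ⟨b, -, hb⟩ := mem_biUnion.1 (hcover ▸ mem_univ e.2)
  have hab : a ≠ b := by rintro rfl; exact hout ⟨a, ⟨haI, hpa⟩, hb⟩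
  refine mem_biUnion.2 ⟨min a b, hI (min_le_left a b) haI, ?_⟩
  exact mem_orientedCut_min heE ha hb hab (fun _ => hpa)
    fun h hpb => hout ⟨b, ⟨hI h.le haI, hpb⟩, hb⟩

lemma edgesFromTo_compl_biUnion_filter_not_subset (hcover : univ.biUnion X = univ) :
    edgesFromTo E ((I.filter (¬ p ·)).biUnion X)ᶜ ((I.filter (¬ p ·)).biUnion X) ⊆
      I.biUnion (orientedCut X E p) := by
  intro e he
  simp only [edgesFromTo, mem_filter, mem_compl, mem_biUnion] at he
  obtain ⟨heE, hout, b, ⟨hbI, hpb⟩, hb⟩ := he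
  obtain ⟨a, -, ha⟩ := mem_biUnion.1 (hcover ▸ mem_univ e.1)
  have hab : a ≠ b := by rintro rfl; exact hout ⟨a, ⟨hbI, hpb⟩, ha⟩
  refine mem_biUnion.2 ⟨min a b, hI (min_le_right a b) hbI, ?_⟩
  exact mem_orientedCut_min heE ha hb hab
    (fun h => not_not.1 fun hpa => hout ⟨a, ⟨hI h.le hbI, hpa⟩, ha⟩) fun _ => hpb

theorem exists_balanced_cut_card_edgesFromTo_le
    (hdisj : ∀ i j, i ≠ j → Disjoint (X i) (X j)) (hcover : univ.biUnion X = univ)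
    {c : ℝ} (hc : 0 ≤ c) (hsparse : ∀ j ∈ I, (#(orientedCut X E p j) : ℝ) ≤ c * #(X j))
    (hlo : (Fintype.card V : ℝ) / 4 ≤ #(I.biUnion X))
    (hhi : (#(I.biUnion X) : ℝ) ≤ 3 * Fintype.card V / 4) :
    ∃ A B : Finset V, Disjoint A B ∧ A ∪ B = univ ∧ (Fintype.card V : ℝ) / 8 ≤ #A ∧
      (Fintype.card V : ℝ) / 8 ≤ #B ∧ (#(edgesFromTo E A B) : ℝ) ≤ c * Fintype.card V := by
  set U := I.biUnion X
  set A₁ := (I.filter p).biUnion X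
  set A₂ := (I.filter (¬ p ·)).biUnion X
  have hsplit : (#U : ℝ) ≤ #A₁ + #A₂ := by
    have hU : A₁ ∪ A₂ = U := by rw [← union_biUnion, filter_union_filter_not_eq]
    exact_mod_cast hU ▸ card_union_le A₁ A₂
  have hbound : c * #U ≤ c * Fintype.card V := by gcongr; exact_mod_cast card_le_univ U
  have hcompl : ∀ A ⊆ U, (Fintype.card V : ℝ) / 8 ≤ #Aᶜ := fun A hA => by
    have hUc : (#Uᶜ : ℝ) + #U = Fintype.card V := by exact_mod_cast card_compl_add_card U
    have hAc : (#Uᶜ : ℝ) ≤ #Aᶜ := by exact_mod_cast card_le_card (compl_subset_compl.2 hA)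
    linarith
  have hA₁U : A₁ ⊆ U := biUnion_subset_biUnion_of_subset_left X (filter_subset p I)
  have hA₂U : A₂ ⊆ U := biUnion_subset_biUnion_of_subset_left X (filter_subset _ I)
  rcases le_total (#A₂ : ℝ) #A₁ with h | h
  · refine ⟨A₁, A₁ᶜ, disjoint_compl_right, union_compl A₁, by linarith, hcompl A₁ hA₁U, ?_⟩
    exact (card_le_of_subset_biUnion_orientedCut E p hdisj hsparse
      (edgesFromTo_biUnion_filter_compl_subset E p hI hcover)).trans hbound
  · refine ⟨A₂ᶜ, A₂, disjoint_compl_left, by rw [union_comm, union_compl], hcompl A₂ hA₂U,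
      by linarith, ?_⟩
    exact (card_le_of_subset_biUnion_orientedCut E p hdisj hsparse
      (edgesFromTo_compl_biUnion_filter_not_subset E p hI hcover)).trans hbound

end Partition

end

theorem stmt14_general {V : Type*} [Fintype V] [DecidableEq V] (W Estar : Finset (V × V))
    (α₀ : ℝ) (n r : ℕ)
    (hn : n = Fintype.card V) (hα : 0 < α₀)
    (hexp : ∀ A B : Finset V, A.Nonempty → B.Nonempty → Disjoint A B →
      A ∪ B = Finset.univ →
      α₀ * min (A.card : ℝ) (B.card : ℝ) ≤
        ((W.filter (fun e => e.1 ∈ A ∧ e.2 ∈ B)).card : ℝ))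
    (hEstarCard : (Estar.card : ℝ) ≤ α₀ * (n : ℝ) / 32)
    (X : Fin (r + 1) → Finset V)
    (hdisj : ∀ i j, i ≠ j → Disjoint (X i) (X j))
    (hcover : Finset.univ.biUnion X = Finset.univ)
    (hsize : ∀ j, ((X j).card : ℝ) ≤ (n : ℝ) / 2)
    (hsparse : ∀ j : Fin (r + 1), (j : ℕ) < r →
      ((((W \ Estar).filter (fun e => e.1 ∈ X j ∧
          e.2 ∈ (Finset.univ.filter (fun l : Fin (r + 1) => j < l)).biUnion X)).card : ℝ)
        ≤ α₀ / 2 ^ 20 * ((X j).card : ℝ)) ∨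
      ((((W \ Estar).filter (fun e =>
          e.1 ∈ (Finset.univ.filter (fun l : Fin (r + 1) => j < l)).biUnion X ∧
          e.2 ∈ X j)).card : ℝ) ≤ α₀ / 2 ^ 20 * ((X j).card : ℝ))) :
    (n : ℝ) / 4 ≤ ((X (Fin.last r)).card : ℝ) := by
  subst hn
  by_contra! hlast
  have hV : 0 < Fintype.card V := by
    have : (0 : ℝ) < Fintype.card V / 4 := (Nat.cast_nonneg _).trans_lt hlast
    exact_mod_cast (by linarith : (0 : ℝ) < Fintype.card V)
  have hcard : ∀ s : Finset (Fin (r + 1)), #(s.biUnion X) = ∑ j ∈ s, #(X j) :=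
    fun s => card_biUnion fun i _ j _ h => hdisj i j h
  set s := univ.erase (Fin.last r)
  have hs : (Fintype.card V : ℝ) / 4 ≤ ∑ j ∈ s, (#(X j) : ℝ) := by
    have htotal : ∑ j, (#(X j) : ℝ) = Fintype.card V := by
      rw [← Nat.cast_sum, ← hcard, hcover, card_univ]
    linarith [sum_erase_add univ (fun j => (#(X j) : ℝ)) (mem_univ (Fin.last r))]
  obtain ⟨k, hks, hlo, hhi⟩ :=
    exists_le_sum_filter_le_le_add _ (by positivity) s hs fun j _ => hsize j
  set I := s.filter (· ≤ k)
  have hI : IsLowerSet (I : Set (Fin (r + 1))) := fun i j hji hi => by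
    simp only [I, s, coe_filter, mem_erase, mem_univ, and_true, Set.mem_ofPred_eq] at hi hks ⊢
    exact ⟨fun h => hks (Fin.last_le_iff.1 (h ▸ hji.trans hi.2)), hji.trans hi.2⟩
  have hIsparse : ∀ j ∈ I, _ := fun j hj =>
    card_orientedCut_le (hsparse j (Fin.val_lt_last (mem_erase.1 (mem_filter.1 hj).1).1))
  obtain ⟨A, B, hAB, hcov, hA, hB, hE⟩ := exists_balanced_cut_card_edgesFromTo_le
    (W \ Estar) _ hI hdisj hcover (by positivity) hIsparse
    (by rw [hcard, Nat.cast_sum]; exact hlo) (by rw [hcard, Nat.cast_sum]; linarith)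
  exact (IsDirectedExpander.lt_card_edgesFromTo_sdiff hexp hα hV hEstarCard hAB hcov hA hB).not_ge
    hE

/-- Let `W` be an `n`-vertex directed `α₀`-expander and `E* ⊆ E(W)` with
`|E*| ≤ α₀·n/32`. Suppose `V(W)` is partitioned into sets `X_1,...,X_r,X_{r+1}` such
that for each `j ≤ r`, writing `X'_j = X_{j+1} ∪ ... ∪ X_{r+1}`, either
`|E_{W∖E*}(X_j, X'_j)| ≤ (α₀/2^{20})·|X_j|` or
`|E_{W∖E*}(X'_j, X_j)| ≤ (α₀/2^{20})·|X_j|`, and each `|X_j| ≤ n/2`.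
Then `|X_{r+1}| ≥ n/4`. -/
theorem stmt14 {V : Type*} [Fintype V] [DecidableEq V] (W Estar : Finset (V × V))
    (α₀ : ℝ) (n r : ℕ)
    (hn : n = Fintype.card V) (hα : 0 < α₀)
    (hexp : ∀ A B : Finset V, A.Nonempty → B.Nonempty → Disjoint A B →
      A ∪ B = Finset.univ →
      α₀ * min (A.card : ℝ) (B.card : ℝ) ≤
        ((W.filter (fun e => e.1 ∈ A ∧ e.2 ∈ B)).card : ℝ))
    (hEstar : Estar ⊆ W) (hEstarCard : (Estar.card : ℝ) ≤ α₀ * (n : ℝ) / 32)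
    (X : Fin (r + 1) → Finset V)
    (hne : ∀ j, (X j).Nonempty)
    (hdisj : ∀ i j, i ≠ j → Disjoint (X i) (X j))
    (hcover : Finset.univ.biUnion X = Finset.univ)
    (hsize : ∀ j, ((X j).card : ℝ) ≤ (n : ℝ) / 2)
    (hsparse : ∀ j : Fin (r + 1), (j : ℕ) < r →
      ((((W \ Estar).filter (fun e => e.1 ∈ X j ∧
          e.2 ∈ (Finset.univ.filter (fun l : Fin (r + 1) => j < l)).biUnion X)).card : ℝ)
        ≤ α₀ / 2 ^ 20 * ((X j).card : ℝ)) ∨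
      ((((W \ Estar).filter (fun e =>
          e.1 ∈ (Finset.univ.filter (fun l : Fin (r + 1) => j < l)).biUnion X ∧
          e.2 ∈ X j)).card : ℝ) ≤ α₀ / 2 ^ 20 * ((X j).card : ℝ))) :
    (n : ℝ) / 4 ≤ ((X (Fin.last r)).card : ℝ) :=
  stmt14_general W Estar α₀ n r hn hα hexp hEstarCard X hdisj hcover hsize hsparse
end

section
/- Let G' be a directed graph with a source s, sink t, and nonnegative rational edge lengths ℓ'(e) with Σ_e ℓ'(e) ≤ L and dist_{G'}(s,t) ≥ 1. Then there exists a threshold ρ ∈ (0,1) such that the cut (S,T) with S = {v : dist_{G'}(s,v) ≤ ρ} and T = V∖S satisfies s ∈ S, t ∈ T, and |E_{G'}(S,T)| ≤ L. -/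
/-!
Each edge `(u, v)` can only be cut by thresholds `ρ` with `u` inside the ball of radius `ρ` and
`v` outside it, and since `v` lies in the ball of radius `ρ + ℓ (u, v)` these thresholds form an
interval of length at most `ℓ (u, v)`. Integrating the number of cut edges over `ρ ∈ (0, 1)` thus
gives at most `∑ e, ℓ e ≤ L`, so some `ρ` does at least as well as the average. For `ρ < 1` the
sink lies outside the ball because `dist (s, t) ≥ 1`.
-/

open scoped Classical ENNReal
open MeasureTheory Set

lemma List.zip_tail_concat {V : Type*} {l : List V} {u : V} (h : l.getLast? = some u) (v : V) :
    (l ++ [v]).zip (l ++ [v]).tail = l.zip l.tail ++ [(u, v)] := by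
  induction l with
  | nil => simp at h
  | cons a l ih =>
    cases l with
    | nil => simp_all
    | cons b l' =>
      rw [List.getLast?_cons_cons] at h
      simp only [List.cons_append, List.zip_cons_cons, List.tail_cons] at *
      rw [ih h]

section MonotoneFamily

variable {V : Type*} {f : ℝ → Set V}

lemma ordConnected_setOf_mem_notMem (hf : Monotone f) (a b : V) :
    OrdConnected {ρ | a ∈ f ρ ∧ b ∉ f ρ} :=
  ⟨fun _ hx _ hy _ hz => ⟨hf hz.1 hx.1, fun h => hy.2 (hf hz.2 h)⟩⟩

lemma ediam_setOf_mem_notMem_le (hf : Monotone f) {a b : V} {c : ℝ}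
    (hab : ∀ ρ, a ∈ f ρ → b ∈ f (ρ + c)) :
    Metric.ediam {ρ | a ∈ f ρ ∧ b ∉ f ρ} ≤ ENNReal.ofReal c := by
  refine Metric.ediam_le fun x hx y hy => ?_
  wlog hxy : x ≤ y generalizing x y
  · rw [edist_comm]
    exact this y hy x hx (le_of_not_ge hxy)
  rw [edist_dist, Real.dist_eq, abs_sub_comm, abs_of_nonneg (sub_nonneg.2 hxy)]
  refine ENNReal.ofReal_le_ofReal (not_lt.1 fun h => hy.2 (hf ?_ (hab x hx.1)))
  linarith

theorem exists_mem_Ioo_card_crossing_le_sum (hf : Monotone f) (E : Finset (V × V))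
    (ℓ : V × V → ℝ) (hℓ : ∀ e ∈ E, 0 ≤ ℓ e) (hE : ∀ e ∈ E, ∀ ρ, e.1 ∈ f ρ → e.2 ∈ f (ρ + ℓ e)) :
    ∃ ρ ∈ Ioo (0 : ℝ) 1, ((E.filter fun e => e.1 ∈ f ρ ∧ e.2 ∉ f ρ).card : ℝ) ≤ ∑ e ∈ E, ℓ e := by
  set A : V × V → Set ℝ := fun e => {ρ | e.1 ∈ f ρ ∧ e.2 ∉ f ρ}
  have hA : ∀ e, MeasurableSet (A e) := fun e =>
    (ordConnected_setOf_mem_notMem hf e.1 e.2).measurableSet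
  set cut : ℝ → ℝ≥0∞ := fun ρ => ∑ e ∈ E, (A e).indicator 1 ρ
  have hcut : ∀ ρ, cut ρ = (E.filter fun e => e.1 ∈ f ρ ∧ e.2 ∉ f ρ).card := by
    intro ρ
    rw [Finset.card_filter]
    push_cast
    simp only [cut, A, Set.indicator_apply, mem_ofPred_eq, Pi.one_apply]
  have hmeas : Measurable cut := Finset.measurable_sum _ fun e _ => measurable_one.indicator (hA e)
  have hint : ∫⁻ ρ in Ioo 0 1, cut ρ ≤ ENNReal.ofReal (∑ e ∈ E, ℓ e) :=
    calc ∫⁻ ρ in Ioo 0 1, cut ρ = ∑ e ∈ E, volume (A e ∩ Ioo 0 1) := by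
          rw [lintegral_finsetSum _ fun e _ => measurable_one.indicator (hA e)]
          simp only [lintegral_indicator_one (hA _), Measure.restrict_apply (hA _)]
      _ ≤ ∑ e ∈ E, ENNReal.ofReal (ℓ e) := Finset.sum_le_sum fun e he =>
          (measure_mono inter_subset_left).trans <| (Real.volume_le_diam _).trans <|
            ediam_setOf_mem_notMem_le hf (hE e he)
      _ = ENNReal.ofReal (∑ e ∈ E, ℓ e) := (ENNReal.ofReal_sum_of_nonneg hℓ).symm
  obtain ⟨ρ, hρ, hle⟩ := exists_le_setLAverage (μ := volume) (s := Ioo (0 : ℝ) 1) (by simp)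
    (by simp) hmeas.aemeasurable
  rw [setLAverage_eq, Real.volume_Ioo, sub_zero, ENNReal.ofReal_one, div_one, hcut,
    ← ENNReal.ofReal_natCast] at hle
  exact ⟨ρ, hρ, (ENNReal.ofReal_le_ofReal_iff (Finset.sum_nonneg hℓ)).1 (hle.trans hint)⟩

end MonotoneFamily

section PathBall

variable {V : Type*} (E : Finset (V × V)) (ℓ : V × V → ℝ) (s : V)

/-- The ball `{v | dist (s, v) ≤ ρ}`, with the infimum over walks defining `dist` unfolded. -/
def pathBall (ρ : ℝ) : Set V :=
  {v | ∃ p : List V, p.IsChain (fun a b => (a, b) ∈ E) ∧ p.head? = some s ∧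
    p.getLast? = some v ∧ ((p.zip p.tail).map ℓ).sum ≤ ρ}

lemma pathBall_mono : Monotone (pathBall E ℓ s) := by
  rintro ρ ρ' h v ⟨p, hp, hs, hv, hlen⟩
  exact ⟨p, hp, hs, hv, hlen.trans h⟩

variable {E ℓ s}

lemma mem_pathBall_self {ρ : ℝ} (hρ : 0 ≤ ρ) : s ∈ pathBall E ℓ s ρ :=
  ⟨[s], List.isChain_singleton _, rfl, rfl, by simpa using hρ⟩

lemma mem_pathBall_add {u v : V} {ρ : ℝ} (he : (u, v) ∈ E) (hu : u ∈ pathBall E ℓ s ρ) :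
    v ∈ pathBall E ℓ s (ρ + ℓ (u, v)) := by
  obtain ⟨p, hp, hs, hpu, hlen⟩ := hu
  have hne : p ≠ [] := by
    rintro rfl
    simp at hs
  refine ⟨p ++ [v], ?_, by rw [List.head?_append, hs]; rfl, List.getLast?_concat, ?_⟩
  · refine List.isChain_append.2 ⟨hp, List.isChain_singleton _, fun x hx y hy => ?_⟩
    rw [hpu, Option.mem_some_iff] at hx
    rw [List.head?_cons, Option.mem_some_iff] at hy
    exact hx ▸ hy ▸ he
  · rw [List.zip_tail_concat hpu, List.map_append, List.sum_append]
    simpa using hlen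

end PathBall

theorem stmt16_general {V : Type*} (E : Finset (V × V)) (s t : V)
    (ℓ : V × V → ℝ) (L : ℝ)
    (hℓ : ∀ e, 0 ≤ ℓ e)
    (hsum : ∑ e ∈ E, ℓ e ≤ L)
    (hdist : ∀ p : List V, p.Chain' (fun a b => (a, b) ∈ E) → p.head? = some s →
      p.getLast? = some t → 1 ≤ ((p.zip p.tail).map ℓ).sum) :
    ∃ ρ : ℝ, 0 < ρ ∧ ρ < 1 ∧ ∃ S : Set V,
      S = {v | ∃ p : List V, p.Chain' (fun a b => (a, b) ∈ E) ∧ p.head? = some s ∧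
        p.getLast? = some v ∧ ((p.zip p.tail).map ℓ).sum ≤ ρ} ∧
      s ∈ S ∧ t ∉ S ∧
      ((E.filter (fun e => e.1 ∈ S ∧ e.2 ∉ S)).card : ℝ) ≤ L := by
  obtain ⟨ρ, ⟨hρ0, hρ1⟩, hcut⟩ := exists_mem_Ioo_card_crossing_le_sum (pathBall_mono E ℓ s) E ℓ
    (fun e _ => hℓ e) (fun _ he _ hu => mem_pathBall_add he hu)
  refine ⟨ρ, hρ0, hρ1, pathBall E ℓ s ρ, rfl, mem_pathBall_self hρ0.le, ?_, hcut.trans hsum⟩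
  rintro ⟨p, hp, hs, ht, hlen⟩
  linarith [hdist p hp hs ht]

/-- Let `G'` be a directed graph with a source `s`, sink `t`, and nonnegative edge
lengths `ℓ'(e)` with `Σ_e ℓ'(e) ≤ L` and `dist_{G'}(s,t) ≥ 1`. Then there exists a
threshold `ρ ∈ (0,1)` such that the cut `(S,T)` with
`S = {v : dist_{G'}(s,v) ≤ ρ}` and `T = V∖S` satisfies `s ∈ S`, `t ∉ S`, and
`|E_{G'}(S,T)| ≤ L`. -/
theorem stmt16 {V : Type*} [Fintype V] (E : Finset (V × V)) (s t : V)
    (ℓ : V × V → ℝ) (L : ℝ)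
    (hℓ : ∀ e, 0 ≤ ℓ e)
    (hsum : ∑ e ∈ E, ℓ e ≤ L)
    (hdist : ∀ p : List V, p.Chain' (fun a b => (a, b) ∈ E) → p.head? = some s →
      p.getLast? = some t → 1 ≤ ((p.zip p.tail).map ℓ).sum) :
    ∃ ρ : ℝ, 0 < ρ ∧ ρ < 1 ∧ ∃ S : Set V,
      S = {v | ∃ p : List V, p.Chain' (fun a b => (a, b) ∈ E) ∧ p.head? = some s ∧
        p.getLast? = some v ∧ ((p.zip p.tail).map ℓ).sum ≤ ρ} ∧
      s ∈ S ∧ t ∉ S ∧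
      ((E.filter (fun e => e.1 ∈ S ∧ e.2 ∉ S)).card : ℝ) ≤ L :=
  stmt16_general E s t ℓ L hℓ hsum hdist
end
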